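/- arXiv:2605.20486 — 6 statements merged into one kernel-verified Lean document; each statement's English description precedes it below -/
import Mathlib

section
/- (Determination Theorem) Let (X,d) be a compact metric space and let u₁, u₂ : X → ℝ be continuous functions such that s[u₁](x) = s[u₂](x) < +∞ for all x ∈ X, and such that u₁(x) = u₂(x) for every x ∈ X with s[u₁](x) = s[u₂](x) = 0. Then u₁ = u₂. -/
open Filter Topology Set MeasureTheory
open scoped ENNReal NNReal

/-- The local (descent) slope of `u` at `x`, relative to the ambient set `A`. -/
noncomputable def locSlopeOn {X : Type*} [PseudoMetricSpace X] (u : X → ℝ) (A : Set X) (x : X) :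
    ℝ≥0∞ :=
  Filter.limsup (fun y => ENNReal.ofReal (max (u x - u y) 0 / dist x y)) (𝓝[A \ {x}] x)

/-- The local (descent) slope of `u` at `x`. -/
noncomputable def locSlope {X : Type*} [PseudoMetricSpace X] (u : X → ℝ) (x : X) : ℝ≥0∞ :=
  locSlopeOn u Set.univ x

/-- The intrinsic (length) distance between two points. -/
noncomputable def intrinsicDist {X : Type*} [PseudoMetricSpace X] (x y : X) : ℝ≥0∞ :=
  ⨅ (T : ℝ) (_ : 0 ≤ T) (γ : ℝ → X) (_ : ContinuousOn γ (Set.Icc 0 T))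
    (_ : γ 0 = x) (_ : γ T = y), eVariationOn γ (Set.Icc 0 T)

/-- Compatibility condition (CC). -/
def SatisfiesCC {X : Type*} [PseudoMetricSpace X] (Ω : Set X) (ℓ g : X → ℝ) : Prop :=
  ∀ x ∈ frontier Ω, ∀ y ∈ frontier Ω, ∀ T > (0:ℝ), ∀ γ : ℝ → X,
    LipschitzOnWith 1 γ (Set.Icc 0 T) → Set.MapsTo γ (Set.Icc 0 T) (closure Ω) →
    γ 0 = y → γ T = x → Set.MapsTo γ (Set.Ioo 0 T) Ω →
    g x - g y ≤ ∫ t in (0:ℝ)..T, ℓ (γ t)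

/-- Continuous pointwise solution of the slope eikonal equation. -/
def IsEikonalSol {X : Type*} [PseudoMetricSpace X] (Ω : Set X) (ℓ g u : X → ℝ) : Prop :=
  ContinuousOn u (closure Ω) ∧
  (∀ x ∈ Ω, locSlopeOn u (closure Ω) x = ENNReal.ofReal (ℓ x)) ∧
  ∀ x ∈ frontier Ω, u x = g x

/-- Eikonal space. -/
def IsEikonalSpace (X : Type*) [MetricSpace X] : Prop :=
  ∀ Ω : Set X, IsOpen Ω → Ω.Nonempty → Ω ≠ Set.univ →
    ∀ ℓ g : X → ℝ, ContinuousOn ℓ Ω → (∃ M, ∀ x ∈ Ω, |ℓ x| ≤ M) →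
      (∃ c > 0, ∀ x ∈ Ω, c ≤ ℓ x) → ContinuousOn g (frontier Ω) →
      SatisfiesCC Ω ℓ g → ∃ u : X → ℝ, IsEikonalSol Ω ℓ g u

/-- The `E_{1,0}` property. -/
def HasE10 (X : Type*) [MetricSpace X] : Prop :=
  ∀ K : Set X, IsClosed K → K.Nonempty →
    ∃ u : X → ℝ, Continuous u ∧ (∀ x ∉ K, locSlope u x = 1) ∧ ∀ x ∈ K, u x = 0

/-!
Suppose `u₂ x₀ < u₁ x₀`. For `k > 1` close enough to `1`, minimise `u₂` over the compact
superlevel set `{ψ ≥ ψ x₀}` of `ψ = u₁ - k u₂`; at the minimiser `x'` still `u₂ x' < u₁ x'`, so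
the common slope `σ` at `x'` is nonzero. Since `σ < k σ`, points near `x'` along which `u₂` descends
at rate close to `σ` make `u₁` descend at rate below `k σ`, hence increase `ψ` while decreasing `u₂`,
contradicting minimality. So `u₁ ≤ u₂`, and by symmetry `u₁ = u₂`.
-/

open Filter Topology

section Slope

variable {X : Type*} [PseudoMetricSpace X]

lemma locSlope_eq_limsup_nhdsNE (u : X → ℝ) (x : X) :
    locSlope u x = limsup (fun y => ENNReal.ofReal (max (u x - u y) 0 / dist x y)) (𝓝[≠] x) := by
  rw [locSlope, locSlopeOn, ← Set.compl_eq_univ_sdiff]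

lemma exists_descent_of_locSlope_lt_of_lt_locSlope {u v : X → ℝ} {x : X} {a b : ℝ}
    (ha : locSlope u x < ENNReal.ofReal a) (hb : ENNReal.ofReal b < locSlope v x) :
    ∃ y, 0 < dist x y ∧ u x - u y < a * dist x y ∧ b * dist x y < v x - v y := by
  rw [locSlope_eq_limsup_nhdsNE] at ha hb
  obtain ⟨y, hbv, hau⟩ :=
    ((frequently_lt_of_lt_limsup (h := hb)).and_eventually (eventually_lt_of_limsup_lt ha)).exists
  obtain ⟨hbv, hpos⟩ := ENNReal.ofReal_lt_ofReal_iff'.mp hbv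
  obtain ⟨hv, hd⟩ : 0 < max (v x - v y) 0 ∧ 0 < dist x y := by
    rcases div_pos_iff.mp hpos with h | h
    · exact h
    · exact absurd h.2 dist_nonneg.not_gt
  rw [max_eq_left ((lt_max_iff.mp hv).resolve_right (lt_irrefl 0)).le, lt_div_iff₀ hd] at hbv
  have hau := (ENNReal.ofReal_lt_ofReal_iff'.mp hau).1
  rw [div_lt_iff₀ hd] at hau
  exact ⟨y, hd, (le_max_left _ _).trans_lt hau, hbv⟩

lemma exists_lt_and_sub_le_mul_sub_of_locSlope_eq {u v : X → ℝ} {x : X} {k : ℝ} (hk : 1 < k)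
    (h0 : locSlope u x ≠ 0) (hfin : locSlope u x ≠ ⊤) (heq : locSlope v x = locSlope u x) :
    ∃ y, v y < v x ∧ u x - u y ≤ k * (v x - v y) := by
  set s := (locSlope u x).toReal
  have hs : 0 < s := ENNReal.toReal_pos h0 hfin
  have hσ : locSlope u x = ENNReal.ofReal s := (ENNReal.ofReal_toReal hfin).symm
  -- rates `a = (1 + k) s / 2 ∈ (s, k s)` and `b = a / k < s`, so that `a = k b`
  have ha : locSlope u x < ENNReal.ofReal ((1 + k) * s / 2) := by
    rw [hσ, ENNReal.ofReal_lt_ofReal_iff (by positivity)]; nlinarith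
  have hb : ENNReal.ofReal ((1 + k) * s / 2 / k) < locSlope v x := by
    rw [heq, hσ, ENNReal.ofReal_lt_ofReal_iff hs, div_lt_iff₀ (by linarith)]; nlinarith
  obtain ⟨y, hd, hu, hv⟩ := exists_descent_of_locSlope_lt_of_lt_locSlope ha hb
  have hbd : 0 < (1 + k) * s / 2 / k * dist x y := by
    have : 0 < k := by linarith
    positivity
  refine ⟨y, by linarith, ?_⟩
  calc u x - u y ≤ (1 + k) * s / 2 * dist x y := hu.le
    _ = k * ((1 + k) * s / 2 / k * dist x y) := by field_simp
    _ ≤ k * (v x - v y) := by gcongr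

lemma le_of_locSlope_eq [CompactSpace X] {u₁ u₂ : X → ℝ}
    (hc₁ : Continuous u₁) (hc₂ : Continuous u₂)
    (hs : ∀ x, locSlope u₁ x = locSlope u₂ x) (hfin : ∀ x, locSlope u₁ x ≠ ⊤)
    (h0 : ∀ x, locSlope u₁ x = 0 → u₁ x = u₂ x) (x₀ : X) :
    u₁ x₀ ≤ u₂ x₀ := by
  by_contra! hx₀
  obtain ⟨C, hC⟩ := isCompact_univ.exists_bound_of_continuousOn hc₂.continuousOn
  have hC₀ : 0 ≤ C := (norm_nonneg _).trans (hC x₀ trivial)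
  have hosc : ∀ x, -(2 * C) ≤ u₂ x - u₂ x₀ := fun x => by
    have := abs_le.mp (hC x trivial); have := abs_le.mp (hC x₀ trivial); linarith
  set c := (u₁ x₀ - u₂ x₀) / (2 * C + 1)
  have hc : 0 < c := div_pos (by linarith) (by linarith)
  have hc2C : c * (2 * C) < u₁ x₀ - u₂ x₀ := by
    have := div_mul_cancel₀ (u₁ x₀ - u₂ x₀) (by linarith : 2 * C + 1 ≠ 0)
    nlinarith
  set ψ : X → ℝ := fun x => u₁ x - (1 + c) * u₂ x
  have hψ : Continuous ψ := hc₁.sub (continuous_const.mul hc₂)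
  obtain ⟨x', hx'ψ, hx'min⟩ :=
    (isClosed_le continuous_const hψ).isCompact.exists_isMinOn ⟨x₀, le_refl (ψ x₀)⟩
      hc₂.continuousOn
  have hgap : u₂ x' < u₁ x' := by
    have : ψ x₀ ≤ ψ x' := hx'ψ
    nlinarith [mul_le_mul_of_nonneg_left (hosc x') hc.le]
  have hslope : locSlope u₁ x' ≠ 0 := fun h => hgap.ne' (h0 x' h)
  obtain ⟨y, hy, hdescent⟩ := exists_lt_and_sub_le_mul_sub_of_locSlope_eq (k := 1 + c) (by linarith)
    hslope (hfin x') (hs x').symm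
  have hyψ : ψ x₀ ≤ ψ y := (show ψ x₀ ≤ ψ x' from hx'ψ).trans (by simp only [ψ]; linarith)
  exact (hx'min hyψ).not_gt hy

end Slope

/-- **Determination Theorem.** -/
theorem stmt2 {X : Type*} [MetricSpace X] [CompactSpace X] (u₁ u₂ : X → ℝ)
    (hc₁ : Continuous u₁) (hc₂ : Continuous u₂)
    (hs : ∀ x, locSlope u₁ x = locSlope u₂ x)
    (hfin : ∀ x, locSlope u₁ x ≠ ⊤)
    (h0 : ∀ x, locSlope u₁ x = 0 → u₁ x = u₂ x) :
    u₁ = u₂ := by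
  have hs' : ∀ x, locSlope u₂ x = locSlope u₁ x := fun x => (hs x).symm
  have hfin' : ∀ x, locSlope u₂ x ≠ ⊤ := fun x => hs' x ▸ hfin x
  have h0' : ∀ x, locSlope u₂ x = 0 → u₂ x = u₁ x := fun x hx => (h0 x (hs x ▸ hx)).symm
  funext x
  exact le_antisymm (le_of_locSlope_eq hc₁ hc₂ hs hfin h0 x)
    (le_of_locSlope_eq hc₂ hc₁ hs' hfin' h0' x)
end

section
/- Let X = [0,1] be endowed with the snowflake metric d(x,y) = √|x−y|, let 0 < a < b < 1, and define ψ : [0,1] → ℝ by ψ(x) = x−a for x ∈ [a,(a+b)/2], ψ(x) = b−x for x ∈ [(a+b)/2, b], and ψ(x) = 0 otherwise. Then ψ is continuous and s[ψ](x) = 0 for every x ∈ [0,1]; in particular ψ is a nonconstant function with zero local slope everywhere on ([0,1], d). -/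
open Filter Topology Set MeasureTheory
open scoped ENNReal NNReal

/-- The unit interval, to be endowed with the snowflake metric `d(x,y) = √|x-y|`. -/
structure Snow : Type where
  val : ℝ
  mem : val ∈ Set.Icc (0:ℝ) 1

private theorem sqrt_subadd {a b : ℝ} (ha : 0 ≤ a) (hb : 0 ≤ b) :
    Real.sqrt (a + b) ≤ Real.sqrt a + Real.sqrt b := by
  have sa := Real.sq_sqrt ha
  have sb := Real.sq_sqrt hb
  have na := Real.sqrt_nonneg a
  have nb := Real.sqrt_nonneg b
  have h2 : a + b ≤ (Real.sqrt a + Real.sqrt b) ^ 2 := by nlinarith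
  calc Real.sqrt (a + b) ≤ Real.sqrt ((Real.sqrt a + Real.sqrt b) ^ 2) :=
        Real.sqrt_le_sqrt h2
    _ = Real.sqrt a + Real.sqrt b := Real.sqrt_sq (by positivity)

/-- The snowflake metric `d(x,y) = √|x - y|` on `[0,1]`. -/
noncomputable instance : MetricSpace Snow where
  dist x y := Real.sqrt |x.val - y.val|
  dist_self x := by simp
  dist_comm x y := by (try simp only); rw [abs_sub_comm]
  dist_triangle x y z := by
    try simp only
    calc Real.sqrt |x.val - z.val| ≤ Real.sqrt (|x.val - y.val| + |y.val - z.val|) :=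
          Real.sqrt_le_sqrt (abs_sub_le _ _ _)
      _ ≤ Real.sqrt |x.val - y.val| + Real.sqrt |y.val - z.val| :=
          sqrt_subadd (abs_nonneg _) (abs_nonneg _)
  eq_of_dist_eq_zero := by
    intro x y h
    try simp only at h
    have h0 : |x.val - y.val| = 0 := by
      have := Real.sqrt_eq_zero (abs_nonneg _) |>.mp h
      exact this
    cases x; cases y
    simp only [abs_eq_zero, sub_eq_zero] at h0
    simpa using h0

/-- The piecewise tent function `ψ`. -/
noncomputable def psi (a b : ℝ) (x : Snow) : ℝ :=
  if x.val ∈ Set.Icc a ((a + b) / 2) then x.val - a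
  else if x.val ∈ Set.Icc ((a + b) / 2) b then b - x.val
  else 0


/-!
The Euclidean distance is the square of the snowflake distance, so the tent function `ψ`, being
`1`-Lipschitz for the former, is Hölder of exponent `2` for the latter. A Hölder function of
exponent `r > 1` has zero slope everywhere, since its difference quotients are
`O(d(x, y) ^ (r - 1))`.
-/

theorem HolderWith.of_dist_le {X Y : Type*} [PseudoMetricSpace X] [PseudoMetricSpace Y]
    {C r : ℝ≥0} {f : X → Y} (h : ∀ x y, dist (f x) (f y) ≤ C * dist x y ^ (r : ℝ)) :
    HolderWith C r f := fun x y => by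
  have hnn : nndist (f x) (f y) ≤ C * nndist x y ^ (r : ℝ) := by
    rw [← NNReal.coe_le_coe]; push_cast; exact h x y
  rw [edist_nndist, edist_nndist, ← ENNReal.coe_rpow_of_nonneg _ r.coe_nonneg]
  exact_mod_cast hnn

theorem HolderWith.locSlopeOn_eq_zero {X : Type*} [PseudoMetricSpace X] {C r : ℝ≥0}
    {u : X → ℝ} (hu : HolderWith C r u) (hr : 1 < r) (A : Set X) (x : X) :
    locSlopeOn u A x = 0 := by
  have hr' : 0 < (r : ℝ) - 1 := sub_pos.2 (by exact_mod_cast hr)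
  have hbound : ∀ y, ENNReal.ofReal (max (u x - u y) 0 / dist x y) ≤
      ENNReal.ofReal (C * dist x y ^ ((r : ℝ) - 1)) := fun y => by
    gcongr
    refine div_le_of_le_mul₀ dist_nonneg (by positivity) ?_
    rw [mul_assoc, ← Real.rpow_add_one' dist_nonneg (by linarith), sub_add_cancel]
    calc max (u x - u y) 0 ≤ dist (u x) (u y) :=
          max_le ((le_abs_self _).trans (Real.dist_eq _ _).ge) dist_nonneg
      _ ≤ C * dist x y ^ (r : ℝ) := hu.dist_le x y
  have hlim : Tendsto (fun y => ENNReal.ofReal (C * dist x y ^ ((r : ℝ) - 1))) (𝓝 x) (𝓝 0) := by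
    have hdist : Tendsto (fun y => dist x y) (𝓝 x) (𝓝 0) := by
      simpa using (tendsto_const_nhds (x := x)).dist (tendsto_id (x := 𝓝 x))
    simpa [Real.zero_rpow hr'.ne'] using
      ENNReal.tendsto_ofReal ((hdist.rpow_const (Or.inr hr'.le)).const_mul (C : ℝ))
  refine le_antisymm ?_ bot_le
  calc locSlopeOn u A x ≤ limsup (fun y => ENNReal.ofReal (C * dist x y ^ ((r : ℝ) - 1)))
        (𝓝[A \ {x}] x) := limsup_le_limsup (Eventually.of_forall hbound)
    _ ≤ limsup (fun y => ENNReal.ofReal (C * dist x y ^ ((r : ℝ) - 1))) (𝓝 x) :=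
        limsup_le_limsup_of_le nhdsWithin_le_nhds
    _ = 0 := hlim.limsup_eq

theorem Snow.dist_eq (x y : Snow) : dist x y = √|x.val - y.val| := rfl

theorem Snow.holderWith_val : HolderWith 1 2 Snow.val :=
  HolderWith.of_dist_le fun x y => by
    rw [Real.dist_eq, Snow.dist_eq]
    simp [Real.sq_sqrt (abs_nonneg _)]

theorem psi_eq (a b : ℝ) (x : Snow) : psi a b x = max 0 (min (x.val - a) (b - x.val)) := by
  unfold psi
  split_ifs <;> grind

theorem holderWith_psi (a b : ℝ) : HolderWith 1 2 (psi a b) := by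
  have htent : LipschitzWith 1 fun t : ℝ => max 0 (min (t - a) (b - t)) := by
    simpa using ((IsometryEquiv.subRight a).isometry.lipschitz.min
      (IsometryEquiv.subLeft b).isometry.lipschitz).const_max 0
  have hcomp : psi a b = (fun t : ℝ => max 0 (min (t - a) (b - t))) ∘ Snow.val :=
    funext (psi_eq a b)
  simpa [hcomp] using (holderWith_one.2 htent).comp Snow.holderWith_val

/-- On the snowflaked interval, the tent function `ψ` is continuous,
nonconstant, and has zero local slope everywhere. -/
theorem stmt4 (a b : ℝ) (ha : 0 < a) (hab : a < b) (hb : b < 1) :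
    Continuous (psi a b) ∧ (∀ x : Snow, locSlope (psi a b) x = 0) ∧
      ∃ x y : Snow, psi a b x ≠ psi a b y := by
  refine ⟨(holderWith_psi a b).continuous (by norm_num),
    fun x => (holderWith_psi a b).locSlopeOn_eq_zero (by norm_num) univ x,
    ⟨(a + b) / 2, by constructor <;> linarith⟩, ⟨0, by norm_num⟩, ?_⟩
  rw [psi_eq, psi_eq]
  grind
end

section
/- (Dynamic Programming Principle) Let (X,d) be a metric space and let Ω ⊂ X be an open set with ∂Ω ≠ ∅. Let ℓ : Ω → ℝ be continuous with ℓ > 0 on Ω and let g : ∂Ω → ℝ be continuous. Assume that the value function V : Ω → ℝ defined by V(x) := inf{∫_0^T ℓ(γ(s))ds + g(γ(T)) : T > 0, γ : [0,T] → cl(Ω) is 1-Lipschitz, γ(0)=x, γ(T) ∈ ∂Ω, γ([0,T)) ⊂ Ω} is finite at every point of Ω. Then for all x ∈ Ω, V(x) = inf{∫_0^T ℓ(γ(s))ds + V(γ(T)) : T > 0, γ : [0,T] → Ω is 1-Lipschitz, γ(0) = x}. -/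
open Filter Topology Set MeasureTheory
open scoped ENNReal NNReal

/-- The set of admissible costs defining the value function `V`. -/
def costSetA {X : Type*} [PseudoMetricSpace X] (Ω : Set X) (ℓ g : X → ℝ) (x : X) : Set ℝ :=
  {v | ∃ T > (0:ℝ), ∃ γ : ℝ → X, LipschitzOnWith 1 γ (Set.Icc 0 T) ∧
      Set.MapsTo γ (Set.Icc 0 T) (closure Ω) ∧ γ 0 = x ∧ γ T ∈ frontier Ω ∧
      Set.MapsTo γ (Set.Ico 0 T) Ω ∧ v = (∫ t in (0:ℝ)..T, ℓ (γ t)) + g (γ T)}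

/-- The set of costs appearing in the dynamic programming principle. -/
def costSetB {X : Type*} [PseudoMetricSpace X] (Ω : Set X) (ℓ V : X → ℝ) (x : X) : Set ℝ :=
  {v | ∃ T > (0:ℝ), ∃ γ : ℝ → X, LipschitzOnWith 1 γ (Set.Icc 0 T) ∧
      Set.MapsTo γ (Set.Icc 0 T) Ω ∧ γ 0 = x ∧
      v = (∫ t in (0:ℝ)..T, ℓ (γ t)) + V (γ T)}

/-!
Write `V` for the value function. Concatenating a path that stays in `Ω` up to time `T` with
an admissible path from its endpoint yields an admissible path from `x`, so
`V x ≤ ∫₀ᵀ ℓ ∘ γ + V (γ T)`; since `ℓ ≥ 0`, this survives the case where `ℓ` is not integrable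
along the second path and the integral takes its junk value `0`. Conversely, an admissible path
`γ` exiting at time `T`, cut at `t < T`, is a competitor on `[0, t]` and its tail is admissible
for `γ t`, so every lower bound of the right-hand side is at most
`∫₀ᵗ ℓ ∘ γ + ∫ₜᵀ ℓ ∘ γ + g (γ T)`. Letting `t → 0⁺` gives the cost of `γ`, also when `ℓ ∘ γ` is
not integrable on `[0, T]` and that cost is computed with `∫₀ᵀ = 0`.
-/

namespace LipschitzOnWith

variable {X : Type*} [PseudoMetricSpace X] {K : NNReal} {f f' : ℝ → X}

theorem congr {s : Set ℝ} (hf : LipschitzOnWith K f s) (h : EqOn f f' s) :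
    LipschitzOnWith K f' s := fun x hx y hy => by
  rw [← h hx, ← h hy]
  exact hf hx hy

theorem Icc_union_Icc {a b c : ℝ} (hab : LipschitzOnWith K f (Icc a b))
    (hbc : LipschitzOnWith K f (Icc b c)) : LipschitzOnWith K f (Icc a c) := by
  rw [lipschitzOnWith_iff_dist_le_mul] at hab hbc ⊢
  have key : ∀ s ∈ Icc a c, ∀ t ∈ Icc a c, s ≤ t → dist (f s) (f t) ≤ K * dist s t := by
    intro s hs t ht hst
    rcases le_total t b with htb | hbt
    · exact hab s ⟨hs.1, hst.trans htb⟩ t ⟨hs.1.trans hst, htb⟩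
    rcases le_total b s with hbs | hsb
    · exact hbc s ⟨hbs, hst.trans ht.2⟩ t ⟨hbs.trans hst, ht.2⟩
    calc dist (f s) (f t) ≤ dist (f s) (f b) + dist (f b) (f t) := dist_triangle _ _ _
      _ ≤ K * dist s b + K * dist b t :=
          add_le_add (hab s ⟨hs.1, hsb⟩ b ⟨hs.1.trans hsb, le_rfl⟩)
            (hbc b ⟨le_rfl, hbt.trans ht.2⟩ t ⟨hbt, ht.2⟩)
      _ = K * dist s t := by
          rw [Real.dist_eq, Real.dist_eq, Real.dist_eq, abs_of_nonpos (by linarith),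
            abs_of_nonpos (by linarith), abs_of_nonpos (by linarith)]
          ring
  intro s hs t ht
  rcases le_total s t with hst | hts
  · exact key s hs t ht hst
  · rw [dist_comm, dist_comm s]
    exact key t ht s hs hts

end LipschitzOnWith

namespace intervalIntegral

variable {f : ℝ → ℝ} {a b c : ℝ}

theorem integral_le_add_adjacent_intervals_of_nonneg (hab : a ≤ b) (hbc : b ≤ c)
    (hf : IntervalIntegrable f volume a b) (hf₀ : ∀ t ∈ Icc a b, 0 ≤ f t) :
    ∫ t in a..c, f t ≤ (∫ t in a..b, f t) + ∫ t in b..c, f t := by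
  by_cases hf' : IntervalIntegrable f volume b c
  · exact (integral_add_adjacent_intervals hf hf').ge
  have hac : ¬IntervalIntegrable f volume a c := fun h =>
    hf' ((IntervalIntegrable.trans_iff (mem_uIcc_of_le hab hbc)).1 h).2
  rw [integral_undef hac, integral_undef hf', add_zero]
  exact integral_nonneg hab hf₀

/-- Splitting `∫ₐᵇ` at `t` is exact when `f` is integrable on `[a, b]`; otherwise
`∫ₜᵇ f = 0 = ∫ₐᵇ f` for `t` near `a`, and `∫ₐᵗ f → 0`. -/
theorem tendsto_integral_add_integral_nhdsGT (hac : a < c) (hf : IntervalIntegrable f volume a c) :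
    Tendsto (fun t => (∫ s in a..t, f s) + ∫ s in t..b, f s) (𝓝[>] a) (𝓝 (∫ s in a..b, f s)) := by
  have hIcc : Icc a c ∈ 𝓝[>] a := Icc_mem_nhdsGT hac
  have hleft : ∀ t ∈ Icc a c, IntervalIntegrable f volume a t := fun t ht =>
    hf.mono_set (uIcc_subset_uIcc_left (by simpa [uIcc_of_le hac.le] using ht))
  by_cases hab : IntervalIntegrable f volume a b
  · refine tendsto_const_nhds.congr' ?_
    filter_upwards [hIcc] with t ht
    exact (integral_add_adjacent_intervals (hleft t ht) ((hleft t ht).symm.trans hab)).symm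
  have hprim : Tendsto (fun t => ∫ s in a..t, f s) (𝓝[>] a) (𝓝 0) := by
    have := (continuousOn_primitive_interval' hf left_mem_uIcc a left_mem_uIcc)
      |>.mono_of_mem_nhdsWithin (by simpa [uIcc_of_le hac.le] using hIcc)
    simpa using this.tendsto
  rw [integral_undef hab]
  refine hprim.congr' ?_
  filter_upwards [hIcc] with t ht
  rw [integral_undef fun htb => hab ((hleft t ht).trans htb), add_zero]

end intervalIntegral

section Concatenation

variable {X : Type*}

noncomputable def concatPath (γ σ : ℝ → X) (T : ℝ) : ℝ → X :=
  fun t => if t ≤ T then γ t else σ (t - T)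

variable {γ σ : ℝ → X} {T S t : ℝ}

theorem concatPath_of_le (ht : t ≤ T) : concatPath γ σ T t = γ t := if_pos ht

theorem concatPath_of_ge (hσ₀ : σ 0 = γ T) (ht : T ≤ t) : concatPath γ σ T t = σ (t - T) := by
  rcases ht.eq_or_lt with rfl | ht
  · simp [concatPath, hσ₀]
  · exact if_neg (not_le.2 ht)

theorem mapsTo_concatPath {s : Set X} {J : Set ℝ} (hγ : ∀ t ∈ J, t ≤ T → γ t ∈ s)
    (hσ : ∀ t ∈ J, T < t → σ (t - T) ∈ s) : MapsTo (concatPath γ σ T) J s := by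
  intro t ht
  rcases le_or_gt t T with htT | hTt
  · rw [concatPath_of_le htT]
    exact hγ t ht htT
  · rw [concatPath, if_neg (not_le.2 hTt)]
    exact hσ t ht hTt

theorem lipschitzOnWith_concatPath [PseudoMetricSpace X] {K : NNReal}
    (hγ : LipschitzOnWith K γ (Icc 0 T)) (hσ : LipschitzOnWith K σ (Icc 0 S)) (hσ₀ : σ 0 = γ T) :
    LipschitzOnWith K (concatPath γ σ T) (Icc 0 (T + S)) := by
  have hshift : LipschitzOnWith K (fun t => σ (t - T)) (Icc T (T + S)) := by
    simpa [Function.comp_def] using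
      hσ.comp (IsometryEquiv.subRight T).isometry.lipschitz.lipschitzOnWith
        fun t ht => ⟨by simpa using ht.1, by simpa [add_comm] using ht.2⟩
  exact (hγ.congr fun t ht => (concatPath_of_le ht.2).symm).Icc_union_Icc
    (hshift.congr fun t ht => (concatPath_of_ge hσ₀ ht.1).symm)

theorem integral_comp_concatPath_le {ℓ : X → ℝ} (hT : 0 ≤ T) (hS : 0 ≤ S) (hσ₀ : σ 0 = γ T)
    (hγ : IntervalIntegrable (fun t => ℓ (γ t)) volume 0 T)
    (hγ₀ : ∀ t ∈ Icc 0 T, 0 ≤ ℓ (γ t)) :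
    ∫ t in (0 : ℝ)..T + S, ℓ (concatPath γ σ T t)
      ≤ (∫ t in (0 : ℝ)..T, ℓ (γ t)) + ∫ t in (0 : ℝ)..S, ℓ (σ t) := by
  have hfirst : EqOn (fun t => ℓ (concatPath γ σ T t)) (fun t => ℓ (γ t)) (uIcc 0 T) :=
    fun t ht => by simp only [concatPath_of_le (uIcc_of_le hT ▸ ht).2]
  have hsecond :
      EqOn (fun t => ℓ (concatPath γ σ T t)) (fun t => ℓ (σ (t - T))) (uIcc T (T + S)) :=
    fun t ht => by
      simp only [concatPath_of_ge hσ₀ (uIcc_of_le (le_add_of_nonneg_right hS) ▸ ht).1]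
  have := intervalIntegral.integral_le_add_adjacent_intervals_of_nonneg hT
    (le_add_of_nonneg_right hS) (hγ.congr (hfirst.symm.mono uIoc_subset_uIcc))
    fun t ht => by simpa only [concatPath_of_le ht.2] using hγ₀ t ht
  rwa [intervalIntegral.integral_congr hfirst, intervalIntegral.integral_congr hsecond,
    intervalIntegral.integral_comp_sub_right (fun t => ℓ (σ t)), sub_self,
    add_sub_cancel_left] at this

end Concatenation

section ValueFunction

variable {X : Type*} [PseudoMetricSpace X] {Ω : Set X} {ℓ g : X → ℝ}

theorem exists_mem_costSetA_le_integral_add (hℓ : ContinuousOn ℓ Ω) (hℓ₀ : ∀ y ∈ Ω, 0 ≤ ℓ y)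
    {γ : ℝ → X} {T w : ℝ} (hT : 0 ≤ T) (hγ : LipschitzOnWith 1 γ (Icc 0 T))
    (hγΩ : MapsTo γ (Icc 0 T) Ω) (hw : w ∈ costSetA Ω ℓ g (γ T)) :
    ∃ v ∈ costSetA Ω ℓ g (γ 0), v ≤ (∫ t in (0 : ℝ)..T, ℓ (γ t)) + w := by
  obtain ⟨S, hS, σ, hσ, hσΩ, hσ₀, hσS, hσΩ', rfl⟩ := hw
  have hγint : IntervalIntegrable (fun t => ℓ (γ t)) volume 0 T :=
    ContinuousOn.intervalIntegrable <| by
      rw [uIcc_of_le hT]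
      exact hℓ.comp hγ.continuousOn hγΩ
  have hend : concatPath γ σ T (T + S) = σ S := by
    rw [concatPath_of_ge hσ₀ (by linarith), add_sub_cancel_left]
  refine ⟨_, ⟨T + S, by linarith, concatPath γ σ T, lipschitzOnWith_concatPath hγ hσ hσ₀,
    mapsTo_concatPath (fun t ht htT => subset_closure (hγΩ ⟨ht.1, htT⟩))
      (fun t ht hTt => hσΩ ⟨by linarith, by linarith [ht.2]⟩),
    concatPath_of_le hT, hend ▸ hσS,
    mapsTo_concatPath (fun t ht htT => hγΩ ⟨ht.1, htT⟩)
      (fun t ht hTt => hσΩ' ⟨by linarith, by linarith [ht.2]⟩), rfl⟩, ?_⟩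
  have := integral_comp_concatPath_le hT hS.le hσ₀ hγint fun t ht => hℓ₀ _ (hγΩ ht)
  rw [hend]
  linarith

theorem tail_mem_costSetA {γ : ℝ → X} {T t : ℝ} (ht : 0 ≤ t) (htT : t < T)
    (hγ : LipschitzOnWith 1 γ (Icc 0 T)) (hγΩ : MapsTo γ (Icc 0 T) (closure Ω))
    (hγT : γ T ∈ frontier Ω) (hγΩ' : MapsTo γ (Ico 0 T) Ω) :
    (∫ s in t..T, ℓ (γ s)) + g (γ T) ∈ costSetA Ω ℓ g (γ t) := by
  have hshift : MapsTo (fun s => s + t) (Icc 0 (T - t)) (Icc 0 T) :=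
    fun s hs => ⟨by linarith [hs.1], by linarith [hs.2]⟩
  refine ⟨T - t, sub_pos.2 htT, fun s => γ (s + t), ?_, hγΩ.comp hshift, by simp,
    by simpa using hγT, hγΩ'.comp fun s hs => ⟨by linarith [hs.1], by linarith [hs.2]⟩, ?_⟩
  · simpa [Function.comp_def] using
      hγ.comp (IsometryEquiv.addRight t).isometry.lipschitz.lipschitzOnWith hshift
  · simp only [intervalIntegral.integral_comp_add_right (fun s => ℓ (γ s)), zero_add,
      sub_add_cancel]

theorem sInf_costSetA_mem_lowerBounds_costSetB (hℓ : ContinuousOn ℓ Ω)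
    (hℓ₀ : ∀ y ∈ Ω, 0 ≤ ℓ y) (hne : ∀ y ∈ Ω, (costSetA Ω ℓ g y).Nonempty) {x : X}
    (hx : BddBelow (costSetA Ω ℓ g x)) :
    sInf (costSetA Ω ℓ g x) ∈ lowerBounds (costSetB Ω ℓ (fun y => sInf (costSetA Ω ℓ g y)) x) := by
  rintro _ ⟨T, hT, γ, hγ, hγΩ, rfl, rfl⟩
  have : sInf (costSetA Ω ℓ g (γ 0)) - ∫ t in (0 : ℝ)..T, ℓ (γ t)
      ≤ sInf (costSetA Ω ℓ g (γ T)) := by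
    refine le_csInf (hne _ (hγΩ ⟨hT.le, le_rfl⟩)) fun w hw => ?_
    obtain ⟨v, hv, hvw⟩ := exists_mem_costSetA_le_integral_add hℓ hℓ₀ hT.le hγ hγΩ hw
    linarith [csInf_le hx hv]
  linarith

theorem lowerBounds_costSetB_subset (hℓ : ContinuousOn ℓ Ω)
    (hbdd : ∀ y ∈ Ω, BddBelow (costSetA Ω ℓ g y)) {x : X} :
    lowerBounds (costSetB Ω ℓ (fun y => sInf (costSetA Ω ℓ g y)) x)
      ⊆ lowerBounds (costSetA Ω ℓ g x) := by
  rintro b hb _ ⟨T, hT, γ, hγ, hγcl, rfl, hγT, hγΩ, rfl⟩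
  have hint : IntervalIntegrable (fun s => ℓ (γ s)) volume 0 (T / 2) := by
    refine ContinuousOn.intervalIntegrable ?_
    rw [uIcc_of_le (by linarith)]
    exact hℓ.comp (hγ.continuousOn.mono (Icc_subset_Icc_right (by linarith)))
      fun s hs => hγΩ ⟨hs.1, by linarith [hs.2]⟩
  refine ge_of_tendsto ((intervalIntegral.tendsto_integral_add_integral_nhdsGT (by linarith)
    hint).add_const (g (γ T))) ?_
  filter_upwards [Ioo_mem_nhdsGT hT] with t ht
  have hcut : (∫ s in (0 : ℝ)..t, ℓ (γ s)) + sInf (costSetA Ω ℓ g (γ t))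
      ∈ costSetB Ω ℓ (fun y => sInf (costSetA Ω ℓ g y)) (γ 0) :=
    ⟨t, ht.1, γ, hγ.mono (Icc_subset_Icc_right ht.2.le),
      fun s hs => hγΩ ⟨hs.1, hs.2.trans_lt ht.2⟩, rfl, rfl⟩
  have htail := csInf_le (hbdd _ (hγΩ ⟨ht.1.le, ht.2⟩))
    (tail_mem_costSetA (g := g) ht.1.le ht.2 hγ hγcl hγT hγΩ)
  linarith [hb hcut]

end ValueFunction

theorem stmt6_general {X : Type*} [MetricSpace X] (Ω : Set X) (ℓ g : X → ℝ) (hℓ : ContinuousOn ℓ Ω)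
    (hpos : ∀ x ∈ Ω, 0 < ℓ x)
    (hfin : ∀ x ∈ Ω, (costSetA Ω ℓ g x).Nonempty ∧ BddBelow (costSetA Ω ℓ g x)) :
    ∀ x ∈ Ω,
      IsGLB (costSetB Ω ℓ (fun y => sInf (costSetA Ω ℓ g y)) x) (sInf (costSetA Ω ℓ g x)) :=
  fun x hx =>
    ⟨sInf_costSetA_mem_lowerBounds_costSetB hℓ (fun y hy => (hpos y hy).le)
        (fun y hy => (hfin y hy).1) (hfin x hx).2,
      fun _ hb => le_csInf (hfin x hx).1
        (lowerBounds_costSetB_subset hℓ (fun y hy => (hfin y hy).2) hb)⟩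

/-- **Dynamic Programming Principle.** -/
theorem stmt6 {X : Type*} [MetricSpace X] (Ω : Set X) (hΩ : IsOpen Ω)
    (hfr : (frontier Ω).Nonempty) (ℓ g : X → ℝ) (hℓ : ContinuousOn ℓ Ω)
    (hpos : ∀ x ∈ Ω, 0 < ℓ x) (hg : ContinuousOn g (frontier Ω))
    (hfin : ∀ x ∈ Ω, (costSetA Ω ℓ g x).Nonempty ∧ BddBelow (costSetA Ω ℓ g x)) :
    ∀ x ∈ Ω,
      IsGLB (costSetB Ω ℓ (fun y => sInf (costSetA Ω ℓ g y)) x) (sInf (costSetA Ω ℓ g x)) :=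
  stmt6_general Ω ℓ g hℓ hpos hfin
end

section
/- Every compact eikonal metric space (X,d) is rectifiably connected: for every pair of points x,y ∈ X there exists a continuous curve of finite length in X joining x to y. -/
open Filter Topology Set MeasureTheory
open scoped ENNReal NNReal

/-!
Solving the eikonal equation on `{y}ᶜ` with `ℓ = 1`, `g = 0` gives a continuous `u` of slope `1`
off `y`; on `Ω = {y}` the equation has no solution, so `y` is not isolated and the slope of `u`
may be taken in all of `X`. A minimiser of `u + d(z, ·) / 2` over the closed `δ`-ball around `z`
either lies inside the ball, where its slope is at most `1 / 2`, so it is `y`; or it lies on the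
sphere, and then `u` dropped by at least `δ / 2`. Iterating gives `δ`-chains from `x` to `y` of
length at most `L = 2 (u x - u y)`, i.e. `δ`-approximately `1`-Lipschitz paths on `[0, L]`, and by
compactness of `ℝ → X` they accumulate at a `1`-Lipschitz curve from `x` to `y`.
-/

section Slope

variable {X : Type*} [MetricSpace X]

lemma locSlopeOn_singleton (u : X → ℝ) (x : X) : locSlopeOn u {x} x = 0 := by
  simp [locSlopeOn]

lemma locSlope_le_of_eventually_sub_le {u : X → ℝ} {p : X} {c : ℝ} (hc : 0 ≤ c)
    (h : ∀ᶠ w in 𝓝 p, u p - u w ≤ c * dist p w) : locSlope u p ≤ ENNReal.ofReal c := by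
  refine limsup_le_of_le (by isBoundedDefault) ?_
  filter_upwards [nhdsWithin_le_nhds h, self_mem_nhdsWithin] with w hw hwp
  have hpos : 0 < dist p w := dist_pos.2 (Ne.symm hwp.2)
  exact ENNReal.ofReal_le_ofReal ((div_le_iff₀ hpos).2 (max_le hw (by positivity)))

end Slope

namespace IsEikonalSpace

variable {X : Type*} [MetricSpace X]

lemma not_isOpen_singleton [Nontrivial X] (h : IsEikonalSpace X) (y : X) :
    ¬IsOpen ({y} : Set X) := by
  intro hopen
  have hfr : frontier ({y} : Set X) = ∅ := IsClopen.frontier_eq ⟨isClosed_singleton, hopen⟩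
  obtain ⟨u, -, hslope, -⟩ :=
    h {y} hopen (singleton_nonempty y) (singleton_ne_univ y) (fun _ => 1) (fun _ => 0)
      continuousOn_const ⟨1, by simp⟩ ⟨1, one_pos, fun _ _ => le_rfl⟩
      (by simp [hfr]) (by simp [SatisfiesCC, hfr])
  simpa [closure_singleton, locSlopeOn_singleton] using hslope y rfl

lemma exists_continuous_locSlope_eq_one [Nontrivial X] (h : IsEikonalSpace X) (y : X) :
    ∃ u : X → ℝ, Continuous u ∧ ∀ z ≠ y, locSlope u z = 1 := by
  have hclosure : closure ({y}ᶜ : Set X) = univ :=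
    (dense_compl_singleton_iff_not_open.2 (h.not_isOpen_singleton y)).closure_eq
  have hfr : frontier ({y}ᶜ : Set X) = {y} := by
    rw [frontier_compl, frontier_eq_closure_inter_closure, hclosure, closure_singleton, inter_univ]
  obtain ⟨x, hx⟩ := exists_ne y
  obtain ⟨u, hcont, hslope, -⟩ :=
    h {y}ᶜ isOpen_compl_singleton ⟨x, hx⟩ (by simp) (fun _ => 1) (fun _ => 0)
      continuousOn_const ⟨1, by simp⟩ ⟨1, one_pos, fun _ _ => le_rfl⟩ continuousOn_const
      (fun _ _ _ _ T hT _ _ _ _ _ _ => by simp [hT.le])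
  rw [hclosure, continuousOn_univ] at hcont
  refine ⟨u, hcont, fun z hz => ?_⟩
  simpa [hclosure, locSlope] using hslope z hz

end IsEikonalSpace

section CoarsePath

variable {X : Type*} [MetricSpace X]

/-- The error `min a δ` vanishes at the starting time, which keeps this property stable under
`consPath`. -/
def IsCoarsePath (δ : ℝ) (f : ℝ → X) : Prop :=
  ∀ a b, 0 ≤ a → a ≤ b → dist (f a) (f b) ≤ b - a + min a δ

noncomputable def consPath (z : X) (f : ℝ → X) (t : ℝ) : X :=
  if t < dist z (f 0) then z else f (t - dist z (f 0))

lemma isCoarsePath_const {δ : ℝ} (hδ : 0 ≤ δ) (p : X) : IsCoarsePath δ fun _ => p := by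
  intro a b ha hab
  simp only [dist_self]
  linarith [le_min ha hδ]

lemma consPath_zero (z : X) (f : ℝ → X) : consPath z f 0 = z := by
  rcases (dist_nonneg : 0 ≤ dist z (f 0)).lt_or_eq with hpos | hzero
  · simp [consPath, hpos]
  · simp [consPath, (dist_eq_zero.1 hzero.symm).symm]

lemma consPath_of_le {z : X} {f : ℝ → X} {t : ℝ} (ht : dist z (f 0) ≤ t) :
    consPath z f t = f (t - dist z (f 0)) := by
  simp [consPath, ht.not_gt]

lemma IsCoarsePath.consPath {δ : ℝ} {f : ℝ → X} (hf : IsCoarsePath δ f) {z : X}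
    (hz : dist z (f 0) ≤ δ) : IsCoarsePath δ (consPath z f) := by
  intro a b ha hab
  set s := dist z (f 0)
  have hs : 0 ≤ s := dist_nonneg
  unfold _root_.consPath
  split_ifs with has hbs hbs
  · simp only [dist_self]
    linarith [le_min ha (hs.trans hz)]
  · have hf0 := hf 0 (b - s) le_rfl (by linarith)
    rw [min_eq_left (hs.trans hz), sub_zero] at hf0
    rw [min_eq_left (by linarith)]
    linarith [dist_triangle z (f 0) (f (b - s))]
  · linarith
  · have := hf (a - s) (b - s) (by linarith) (by linarith)
    linarith [min_le_min_right δ (show a - s ≤ a by linarith)]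

end CoarsePath

section Descent

variable {X : Type*} [MetricSpace X] [CompactSpace X] {u : X → ℝ} {y : X}

lemma exists_descent_step (hu : Continuous u) (hslope : ∀ z ≠ y, 1 ≤ locSlope u z) (z : X)
    {r : ℝ} (hr : 0 ≤ r) :
    ∃ w, dist z w ≤ r ∧ u w + dist z w / 2 ≤ u z ∧ (w = y ∨ dist z w = r) := by
  obtain ⟨w, hw, hmin⟩ := (isCompact_closedBall z r).exists_isMinOn
    (Metric.nonempty_closedBall.2 hr) (f := fun w => u w + dist z w / 2) (by fun_prop)
  rw [Metric.mem_closedBall, dist_comm] at hw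
  refine ⟨w, hw, by simpa using hmin (Metric.mem_closedBall_self hr), ?_⟩
  rcases hw.lt_or_eq with hlt | heq
  · left
    by_contra hwy
    have hslope_le : locSlope u w ≤ ENNReal.ofReal (1 / 2) := by
      refine locSlope_le_of_eventually_sub_le (by norm_num) ?_
      filter_upwards [Metric.isOpen_ball.mem_nhds (Metric.mem_ball'.2 hlt)] with v hv
      have hv_min : u w + dist z w / 2 ≤ u v + dist z v / 2 :=
        hmin (Metric.ball_subset_closedBall hv)
      linarith [dist_triangle z w v]
    have := (hslope w hwy).trans hslope_le
    norm_num [ENNReal.ofReal_lt_one] at this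
  · exact Or.inr heq

lemma exists_coarsePath (hu : Continuous u) (hslope : ∀ z ≠ y, 1 ≤ locSlope u z) {δ : ℝ}
    (hδ : 0 < δ) (z : X) :
    ∃ f : ℝ → X, IsCoarsePath δ f ∧ f 0 = z ∧
      ∃ L ∈ Icc 0 (2 * (u z - u y)), ∀ t ≥ L, f t = y := by
  obtain ⟨m, hm⟩ := (isCompact_range hu).bddBelow
  obtain ⟨N, hN⟩ := exists_nat_gt ((u z - m) / (δ / 2))
  replace hN : u z < m + N * (δ / 2) := by rw [div_lt_iff₀ (by positivity)] at hN; linarith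
  induction N generalizing z with
  | zero =>
    simp only [CharP.cast_eq_zero, zero_mul, add_zero] at hN
    exact absurd (hm ⟨z, rfl⟩) (by linarith)
  | succ N ih =>
    obtain ⟨w, hwδ, hdrop, hw⟩ := exists_descent_step hu hslope z hδ.le
    obtain ⟨f, hf, hf0, L, ⟨hL0, hLw⟩, hfy⟩ : ∃ f : ℝ → X, IsCoarsePath δ f ∧ f 0 = w ∧
        ∃ L ∈ Icc 0 (2 * (u w - u y)), ∀ t ≥ L, f t = y := by
      rcases hw with rfl | hw
      · exact ⟨fun _ => w, isCoarsePath_const hδ.le w, rfl, 0, by simp, fun _ _ => rfl⟩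
      · exact ih w (by push_cast at hN; linarith)
    subst hf0
    refine ⟨consPath z f, hf.consPath hwδ, consPath_zero z f, dist z (f 0) + L,
      ⟨by positivity, by linarith⟩, fun t ht => ?_⟩
    rw [consPath_of_le (by linarith)]
    exact hfy _ (by linarith)

end Descent

lemma exists_lipschitzOnWith_of_coarsePath {X : Type*} [MetricSpace X] [CompactSpace X]
    {x y : X} {L : ℝ} (h : ∀ δ > 0, ∃ f : ℝ → X, IsCoarsePath δ f ∧ f 0 = x ∧ f L = y) :
    ∃ γ : ℝ → X, LipschitzOnWith 1 γ (Ici 0) ∧ γ 0 = x ∧ γ L = y := by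
  choose F hF hF0 hFL using fun n : ℕ => h (1 / (n + 1)) Nat.one_div_pos_of_nat
  let U : Ultrafilter ℕ := .of atTop
  have hγ : Tendsto F U (𝓝 (U.map F).lim) := (U.map F).le_nhds_lim
  set γ := (U.map F).lim
  have hγt (t : ℝ) : Tendsto (fun n => F n t) U (𝓝 (γ t)) :=
    ((continuous_apply t).tendsto γ).comp hγ
  have hdist {a b : ℝ} (ha : 0 ≤ a) (hab : a ≤ b) : dist (γ a) (γ b) ≤ b - a := by
    have herr : Tendsto (fun n : ℕ => b - a + 1 / (n + 1)) U (𝓝 (b - a + 0)) :=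
      tendsto_const_nhds.add <|
        tendsto_one_div_add_atTop_nhds_zero_nat.mono_left (Ultrafilter.of_le _)
    rw [add_zero] at herr
    exact le_of_tendsto_of_tendsto' ((hγt a).dist (hγt b)) herr fun n =>
      (hF n a b ha hab).trans (by gcongr; exact min_le_right _ _)
  refine ⟨γ, LipschitzOnWith.of_dist_le_mul fun a ha b hb => ?_,
    tendsto_nhds_unique (hγt 0) (by simp [hF0]), tendsto_nhds_unique (hγt L) (by simp [hFL])⟩
  rw [NNReal.coe_one, one_mul, Real.dist_eq]
  rcases le_total a b with hab | hba
  · rw [abs_of_nonpos (by linarith)]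
    linarith [hdist ha hab]
  · rw [abs_of_nonneg (by linarith), dist_comm]
    exact hdist hb hba

/-- Every compact eikonal metric space is rectifiably connected. -/
theorem stmt8 {X : Type*} [MetricSpace X] [CompactSpace X] (h : IsEikonalSpace X) (x y : X) :
    ∃ T : ℝ, 0 ≤ T ∧ ∃ γ : ℝ → X, ContinuousOn γ (Set.Icc 0 T) ∧ γ 0 = x ∧ γ T = y ∧
      eVariationOn γ (Set.Icc 0 T) ≠ ⊤ := by
  rcases eq_or_ne x y with rfl | hxy
  · exact ⟨0, le_rfl, fun _ => x, continuousOn_const, rfl, rfl, by simp⟩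
  have : Nontrivial X := ⟨⟨x, y, hxy⟩⟩
  obtain ⟨u, hu, hslope⟩ := h.exists_continuous_locSlope_eq_one y
  have hslope' : ∀ z ≠ y, 1 ≤ locSlope u z := fun z hz => (hslope z hz).ge
  set M := 2 * (u x - u y)
  have hM : 0 ≤ M := by
    obtain ⟨-, -, -, L, hL, -⟩ := exists_coarsePath hu hslope' one_pos x
    exact hL.1.trans hL.2
  obtain ⟨γ, hγ, hγx, hγy⟩ := exists_lipschitzOnWith_of_coarsePath (L := M) fun δ hδ => by
    obtain ⟨f, hf, hfx, L, hL, hfy⟩ := exists_coarsePath hu hslope' hδ x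
    exact ⟨f, hf, hfx, hfy M hL.2⟩
  have hγM : LipschitzOnWith 1 γ (Icc 0 M) := hγ.mono Icc_subset_Ici_self
  refine ⟨M, hM, γ, hγM.continuousOn, hγx, hγy, ?_⟩
  simpa [BoundedVariationOn] using hγM.locallyBoundedVariationOn 0 M ⟨le_rfl, hM⟩ ⟨hM, le_rfl⟩
end

section
/- Let (X,d) be a proper metric space (every closed bounded subset is compact) and let f : X → ℝ be a continuous function such that the local slope s[f] : X → ℝ is (finite and) continuous. Then for every x ∈ X with s[f](x) ≠ 0 there exist T > 0 and a 1-Lipschitz curve γ : [0,T] → X with γ(0) = x such that f(γ(t)) = f(x) − ∫_0^t s[f](γ(s))ds for all t ∈ [0,T]. -/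
/-!
Near `x` the slope stays nonzero on a closed ball of radius `L`. For every `ε > 0` a greedy
construction (each step at least half as long as any admissible one) yields a chain of steps of
length `≤ ε` along which `f` drops at rate at least `s[f] - ε`; by completeness and continuity of
`f` and `s[f]`, the total length of such a chain cannot stay below `L`. Parametrized by arclength,
these chains converge along an ultrafilter, uniformly on `[0, L]` since they are `1`-Lipschitz up
to `ε`, to a `1`-Lipschitz curve `γ`, and the discrete descent passes to the limit as
`∫₀ᴸ s[f](γ) ≤ f x - f (γ L)`. Conversely a finite continuous slope is an upper gradient, so
`f (γ a) - f (γ b) ≤ ∫ₐᵇ s[f](γ)` on every subinterval, and the two inequalities force equality.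
-/

open Filter Topology Set MeasureTheory
open scoped ENNReal NNReal

open Metric

section Slope

variable {X : Type*} [MetricSpace X] {f : X → ℝ} {x : X}

lemma eventually_sub_le_mul_dist_of_locSlope_lt {r : ℝ} (h : locSlope f x < ENNReal.ofReal r) :
    ∀ᶠ y in 𝓝 x, f x - f y ≤ r * dist x y := by
  have hlt : ∀ᶠ y in 𝓝[univ \ {x}] x,
      ENNReal.ofReal (max (f x - f y) 0 / dist x y) < ENNReal.ofReal r :=
    eventually_lt_of_limsup_lt h
  filter_upwards [eventually_nhdsWithin_iff.1 hlt] with y hy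
  rcases eq_or_ne y x with rfl | hyx
  · simp
  have hd : 0 < dist x y := dist_pos.2 hyx.symm
  have := (ENNReal.ofReal_lt_ofReal_iff'.1 (hy ⟨trivial, hyx⟩)).1
  rw [div_lt_iff₀ hd] at this
  linarith [le_max_left (f x - f y) 0]

lemma frequently_mul_dist_lt_sub_of_lt_locSlope {r : ℝ} (h : ENNReal.ofReal r < locSlope f x) :
    ∃ᶠ y in 𝓝[≠] x, r * dist x y < f x - f y := by
  have hlt : ∃ᶠ y in 𝓝[≠] x,
      ENNReal.ofReal r < ENNReal.ofReal (max (f x - f y) 0 / dist x y) := by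
    rw [compl_eq_univ_sdiff]
    exact frequently_lt_of_lt_limsup (by isBoundedDefault) h
  refine (hlt.and_eventually self_mem_nhdsWithin).mono fun y ⟨hy, hyx⟩ => ?_
  have hd : 0 < dist x y := dist_pos.2 (Ne.symm hyx)
  obtain ⟨hr, hpos⟩ := ENNReal.ofReal_lt_ofReal_iff'.1 hy
  rw [lt_div_iff₀ hd] at hr
  have hdesc : 0 < f x - f y :=
    (lt_max_iff.1 ((div_pos_iff_of_pos_right hd).1 hpos)).resolve_right (lt_irrefl 0)
  rwa [max_eq_left hdesc.le] at hr

lemma exists_descent_of_locSlope_ne_zero (h : locSlope f x ≠ 0) {ε : ℝ} (hε : 0 < ε) :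
    ∃ w ≠ x, dist x w < ε ∧ ((locSlope f x).toReal - ε) * dist x w < f x - f w := by
  have hlt : ENNReal.ofReal ((locSlope f x).toReal - ε) < locSlope f x := by
    rcases eq_or_ne (locSlope f x) ⊤ with htop | htop
    · simp [htop]
    rw [← ENNReal.ofReal_toReal htop, ENNReal.ofReal_lt_ofReal_iff
      (ENNReal.toReal_pos h htop), ENNReal.ofReal_toReal htop]
    linarith
  have hnear : ∀ᶠ w in 𝓝[≠] x, w ≠ x ∧ dist x w < ε := by
    refine eventually_mem_nhdsWithin.and (nhdsWithin_le_nhds ?_)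
    exact eventually_nhds_iff_ball.2 ⟨ε, hε, fun w hw => (dist_comm x w).trans_lt hw⟩
  obtain ⟨w, hw, hwx, hdist⟩ := ((frequently_mul_dist_lt_sub_of_lt_locSlope hlt).and_eventually
    hnear).exists
  exact ⟨w, hwx, hdist, hw⟩

end Slope

section UpperGradient

variable {X : Type*} [MetricSpace X] {f : X → ℝ}

/-- A finite continuous slope is an upper gradient along `1`-Lipschitz curves. -/
lemma sub_le_integral_locSlope_of_lipschitzWith (hf : Continuous f)
    (hfin : ∀ x, locSlope f x ≠ ⊤) (hcont : Continuous fun x => (locSlope f x).toReal)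
    {γ : ℝ → X} (hγ : LipschitzWith 1 γ) {a b : ℝ} (hab : a ≤ b) :
    f (γ a) - f (γ b) ≤ ∫ u in a..b, (locSlope f (γ u)).toReal := by
  set F : ℝ → ℝ := fun t => f (γ a) - f (γ t)
  set B : ℝ → ℝ := fun t => ∫ u in a..t, (locSlope f (γ u)).toReal
  have hB : ∀ t, HasDerivAt B (locSlope f (γ t)).toReal t := fun t =>
    ((hcont.comp hγ.continuous).integral_hasStrictDerivAt a t).hasDerivAt
  refine image_le_of_liminf_slope_right_le_deriv_boundary (f := F)
    (continuous_const.sub (hf.comp hγ.continuous)).continuousOn (by simp [F, B])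
    (fun t _ => (hB t).continuousAt.continuousWithinAt) (fun t _ => (hB t).hasDerivWithinAt)
    (fun t _ r hr => ?_) (right_mem_Icc.2 hab)
  obtain ⟨r', hsr', hr'r⟩ := exists_between hr
  have hr' : locSlope f (γ t) < ENNReal.ofReal r' := by
    rwa [← ENNReal.ofReal_toReal (hfin (γ t)),
      ENNReal.ofReal_lt_ofReal_iff (ENNReal.toReal_nonneg.trans_lt hsr')]
  have hnear : ∀ᶠ z in 𝓝 t, F z - F t ≤ r' * dist (γ t) (γ z) := by
    filter_upwards [hγ.continuous.continuousAt.eventually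
      (eventually_sub_le_mul_dist_of_locSlope_lt hr')] with z hz
    simp only [F]
    linarith
  have hright : ∀ᶠ z in 𝓝[>] t, slope F t z < r := by
    filter_upwards [eventually_nhdsWithin_of_eventually_nhds hnear, self_mem_nhdsWithin]
      with z hz htz
    have hzt : 0 < z - t := sub_pos.2 htz
    have hdist : dist (γ t) (γ z) ≤ z - t := by
      simpa [dist_comm t z, Real.dist_eq, abs_of_pos hzt] using hγ.dist_le_mul t z
    rw [slope_def_field, div_lt_iff₀ hzt]
    nlinarith [ENNReal.toReal_nonneg (a := locSlope f (γ t))]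
  exact hright.frequently

lemma sub_le_integral_locSlope (hf : Continuous f)
    (hfin : ∀ x, locSlope f x ≠ ⊤) (hcont : Continuous fun x => (locSlope f x).toReal)
    {γ : ℝ → X} {a b : ℝ} (hγ : LipschitzOnWith 1 γ (Icc a b)) (hab : a ≤ b) :
    f (γ a) - f (γ b) ≤ ∫ u in a..b, (locSlope f (γ u)).toReal := by
  set γ' : ℝ → X := fun u => γ (projIcc a b hab u)
  have hγ' : LipschitzWith 1 γ' := by
    have h := hγ.to_restrict.comp (LipschitzWith.projIcc hab)
    rwa [mul_one] at h
  have heq : EqOn γ' γ (uIcc a b) := fun u hu => by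
    rw [uIcc_of_le hab] at hu
    simp [γ', projIcc_of_mem hab hu]
  have hint : ∫ u in a..b, (locSlope f (γ' u)).toReal = ∫ u in a..b, (locSlope f (γ u)).toReal :=
    intervalIntegral.integral_congr fun u hu => by simp only [heq hu]
  have h := sub_le_integral_locSlope_of_lipschitzWith hf hfin hcont hγ' hab
  rwa [heq left_mem_uIcc, heq right_mem_uIcc, hint] at h

end UpperGradient

section DescentChain

variable {X : Type*} [MetricSpace X]

lemma exists_mem_forall_dist_le_two_mul {s : Set X} {z : X} (hs : BddAbove (dist z '' s))
    (hpos : ∃ w ∈ s, 0 < dist z w) : ∃ w ∈ s, ∀ w' ∈ s, dist z w' ≤ 2 * dist z w := by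
  obtain ⟨w₀, hw₀, hw₀pos⟩ := hpos
  have hD : 0 < sSup (dist z '' s) := hw₀pos.trans_le (le_csSup hs (mem_image_of_mem _ hw₀))
  obtain ⟨_, ⟨w, hw, rfl⟩, hwD⟩ :=
    exists_lt_of_lt_csSup ((nonempty_of_mem hw₀).image _) (half_lt_self hD)
  exact ⟨w, hw, fun w' hw' => by linarith [le_csSup hs (mem_image_of_mem _ hw')]⟩

def IsDescentStep (f : X → ℝ) (ε : ℝ) (z w : X) : Prop :=
  0 < dist z w ∧ dist z w ≤ ε ∧ ((locSlope f z).toReal - ε) * dist z w ≤ f z - f w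

lemma exists_eventually_isDescentStep {ι : Type*} {l : Filter ι} {f : X → ℝ} (hf : Continuous f)
    (hcont : Continuous fun x => (locSlope f x).toReal) {z : ι → X} {z₀ : X}
    (hz : Tendsto z l (𝓝 z₀)) (h0 : locSlope f z₀ ≠ 0) {ε : ℝ} (hε : 0 < ε) :
    ∃ ρ > 0, ∃ w, ∀ᶠ i in l, IsDescentStep f ε (z i) w ∧ ρ < dist (z i) w := by
  obtain ⟨w, hwz, hdist, hdesc⟩ := exists_descent_of_locSlope_ne_zero h0 hε
  have hpos : 0 < dist z₀ w := dist_pos.2 hwz.symm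
  have hd : Tendsto (fun i => dist (z i) w) l (𝓝 (dist z₀ w)) := hz.dist tendsto_const_nhds
  have hmargin : Tendsto (fun i => f (z i) - f w - ((locSlope f (z i)).toReal - ε) * dist (z i) w)
      l (𝓝 (f z₀ - f w - ((locSlope f z₀).toReal - ε) * dist z₀ w)) :=
    (((hf.tendsto z₀).comp hz).sub tendsto_const_nhds).sub
      ((((hcont.tendsto z₀).comp hz).sub tendsto_const_nhds).mul hd)
  refine ⟨dist z₀ w / 2, half_pos hpos, w, ?_⟩
  filter_upwards [hd.eventually_const_lt (half_lt_self hpos), hd.eventually_lt_const hdist,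
    hmargin.eventually_const_lt (by linarith : (0 : ℝ) < _)] with i hρ hε' hm
  exact ⟨⟨(half_pos hpos).trans hρ, hε'.le, by linarith⟩, hρ⟩

def chainLength (z : ℕ → X) (k : ℕ) : ℝ :=
  ∑ j ∈ Finset.range k, dist (z j) (z (j + 1))

@[simp]
lemma chainLength_zero (z : ℕ → X) : chainLength z 0 = 0 := by
  simp [chainLength]

lemma chainLength_succ (z : ℕ → X) (k : ℕ) :
    chainLength z (k + 1) = chainLength z k + dist (z k) (z (k + 1)) :=
  Finset.sum_range_succ _ _

lemma chainLength_mono (z : ℕ → X) : Monotone (chainLength z) :=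
  monotone_nat_of_le_succ fun k => by simp [chainLength_succ, dist_nonneg]

lemma chainLength_nonneg (z : ℕ → X) (k : ℕ) : 0 ≤ chainLength z k :=
  chainLength_zero z ▸ chainLength_mono z k.zero_le

lemma dist_le_abs_chainLength_sub (z : ℕ → X) (i j : ℕ) :
    dist (z i) (z j) ≤ |chainLength z i - chainLength z j| := by
  wlog hij : i ≤ j generalizing i j
  · rw [dist_comm, abs_sub_comm]
    exact this j i (le_of_not_ge hij)
  rw [abs_sub_comm, abs_of_nonneg (sub_nonneg.2 (chainLength_mono z hij))]
  simpa [chainLength, Finset.sum_Ico_eq_sub _ hij] using dist_le_Ico_sum_dist z hij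

lemma dist_le_chainLength (z : ℕ → X) (k : ℕ) : dist (z 0) (z k) ≤ chainLength z k :=
  dist_le_range_sum_dist z k

structure IsDescentChain (f : X → ℝ) (ε L : ℝ) (x : X) (m : ℕ) (z : ℕ → X) : Prop where
  apply_zero : z 0 = x
  step : ∀ k < m, IsDescentStep f ε (z k) (z (k + 1))
  le_chainLength : L ≤ chainLength z m

/-- Greedy construction: each step goes at least half as far as any admissible one, so a chain
of bounded length would converge to a point of nonzero slope, from which all late points admit
a step of definite size. -/
theorem exists_isDescentChain [CompleteSpace X] {f : X → ℝ} (hf : Continuous f)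
    (hcont : Continuous fun x => (locSlope f x).toReal) {x : X} {L ε : ℝ} (hε : 0 < ε)
    (hL : ∀ y ∈ closedBall x L, locSlope f y ≠ 0) : ∃ m z, IsDescentChain f ε L x m z := by
  classical
  have hgreedy : ∀ y, locSlope f y ≠ 0 → ∃ w, IsDescentStep f ε y w ∧
      ∀ w', IsDescentStep f ε y w' → dist y w' ≤ 2 * dist y w := by
    intro y hy
    obtain ⟨w, hwy, hd, hdesc⟩ := exists_descent_of_locSlope_ne_zero hy hε
    have hbdd : BddAbove (dist y '' {w | IsDescentStep f ε y w}) :=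
      ⟨ε, forall_mem_image.2 fun w hw => hw.2.1⟩
    have hw : IsDescentStep f ε y w := ⟨dist_pos.2 hwy.symm, hd.le, hdesc.le⟩
    simpa using exists_mem_forall_dist_le_two_mul hbdd ⟨w, hw, hw.1⟩
  choose! next hnext using hgreedy
  set z : ℕ → X := fun k => next^[k] x
  have hstep : ∀ k, chainLength z k ≤ L → IsDescentStep f ε (z k) (z (k + 1)) ∧
      ∀ w, IsDescentStep f ε (z k) w → dist (z k) w ≤ 2 * dist (z k) (z (k + 1)) := by
    intro k hk
    have hzk : z k ∈ closedBall x L := by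
      rw [mem_closedBall, dist_comm]
      exact (dist_le_chainLength z k).trans hk
    simpa only [z, Function.iterate_succ_apply'] using hnext _ (hL _ hzk)
  have hlong : ∃ k, L ≤ chainLength z k := by
    by_contra! hshort
    have hsum : Summable fun k => dist (z k) (z (k + 1)) :=
      summable_of_sum_range_le (fun _ => dist_nonneg) fun k => (hshort k).le
    obtain ⟨z₀, hz₀⟩ := cauchySeq_tendsto_of_complete (cauchySeq_of_summable_dist hsum)
    have hz₀L : z₀ ∈ closedBall x L := isClosed_closedBall.mem_of_tendsto hz₀
      (Eventually.of_forall fun k => by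
        rw [mem_closedBall, dist_comm]
        exact (dist_le_chainLength z k).trans (hshort k).le)
    obtain ⟨ρ, hρ, w, hw⟩ := exists_eventually_isDescentStep hf hcont hz₀ (hL z₀ hz₀L) hε
    obtain ⟨k, ⟨hwk, hρk⟩, hk⟩ :=
      (hw.and (hsum.tendsto_atTop_zero.eventually (eventually_lt_nhds (half_pos hρ)))).exists
    linarith [(hstep k (hshort k).le).2 w hwk]
  exact ⟨Nat.find hlong, z, ⟨rfl,
    fun k hk => (hstep k (not_le.1 (Nat.find_min hlong hk)).le).1, Nat.find_spec hlong⟩⟩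

end DescentChain

section ChainParam

variable {X : Type*} [MetricSpace X] (z : ℕ → X) (m : ℕ)

/-- The index of the last of the points `z 0, …, z m` reached at arclength `u`. -/
noncomputable def chainIndex (u : ℝ) : ℕ :=
  Nat.findGreatest (fun k => chainLength z k ≤ u) m

noncomputable def chainParam (u : ℝ) : X :=
  z (chainIndex z m u)

lemma chainLength_chainIndex_le {u : ℝ} (hu : 0 ≤ u) : chainLength z (chainIndex z m u) ≤ u :=
  Nat.findGreatest_spec (P := fun k => chainLength z k ≤ u) (Nat.zero_le m) (by simpa using hu)

variable {z m} in
lemma sub_le_chainLength_chainIndex {ε u : ℝ} (hε : 0 ≤ ε)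
    (hstep : ∀ k < m, dist (z k) (z (k + 1)) ≤ ε) (hu : u ≤ chainLength z m) :
    u - ε ≤ chainLength z (chainIndex z m u) := by
  have hm : chainIndex z m u ≤ m := Nat.findGreatest_le m
  rcases hm.eq_or_lt with h | h
  · rw [h]
    linarith
  · have hnext : ¬chainLength z (chainIndex z m u + 1) ≤ u :=
      Nat.findGreatest_is_greatest (lt_add_one _) h
    rw [not_le, chainLength_succ] at hnext
    linarith [hstep _ h]

@[simp]
lemma chainParam_zero : chainParam z m 0 = z 0 :=
  (dist_le_zero.1 <| (dist_le_abs_chainLength_sub z _ _).trans <| by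
    simpa [abs_of_nonneg (chainLength_nonneg z _)] using chainLength_chainIndex_le z m le_rfl).symm

lemma dist_chainParam_le {u : ℝ} (hu : 0 ≤ u) : dist (z 0) (chainParam z m u) ≤ u := by
  have := dist_le_abs_chainLength_sub z 0 (chainIndex z m u)
  rw [chainLength_zero, zero_sub, abs_neg, abs_of_nonneg (chainLength_nonneg z _)] at this
  exact this.trans (chainLength_chainIndex_le z m hu)

variable {z m} {ε : ℝ}

lemma dist_chainParam_chainParam_le (hε : 0 ≤ ε) (hstep : ∀ k < m, dist (z k) (z (k + 1)) ≤ ε)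
    {u v : ℝ} (hu : u ∈ Icc 0 (chainLength z m))
    (hv : v ∈ Icc 0 (chainLength z m)) :
    dist (chainParam z m u) (chainParam z m v) ≤ dist u v + ε := by
  refine (dist_le_abs_chainLength_sub z _ _).trans ?_
  have hu₁ := chainLength_chainIndex_le z m hu.1
  have hu₂ := sub_le_chainLength_chainIndex hε hstep hu.2
  have hv₁ := chainLength_chainIndex_le z m hv.1
  have hv₂ := sub_le_chainLength_chainIndex hε hstep hv.2
  rw [Real.dist_eq, abs_sub_le_iff]
  constructor <;> linarith [le_abs_self (u - v), neg_abs_le (u - v)]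

lemma dist_chainParam_le_of_mem_Icc (hε : 0 ≤ ε) (hstep : ∀ k < m, dist (z k) (z (k + 1)) ≤ ε)
    {k : ℕ} (hk : k < m) {u : ℝ}
    (hu : u ∈ Icc (chainLength z k) (chainLength z (k + 1))) :
    dist (chainParam z m u) (z k) ≤ ε := by
  have hkm : chainLength z (k + 1) ≤ chainLength z m := chainLength_mono z hk
  have hu₀ : 0 ≤ u := (chainLength_nonneg z k).trans hu.1
  have hJ₁ := chainLength_chainIndex_le z m hu₀
  have hJ₂ := sub_le_chainLength_chainIndex hε hstep (hu.2.trans hkm)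
  have hk₂ : u - ε ≤ chainLength z k := by
    linarith [hu.2, chainLength_succ z k, hstep k hk]
  refine (dist_le_abs_chainLength_sub z _ _).trans (abs_sub_le_iff.2 ⟨?_, ?_⟩) <;> linarith [hu.1]

end ChainParam

lemma integral_le_sum_mul_of_le_on_Icc {h : ℝ → ℝ} {t c : ℕ → ℝ} {n : ℕ}
    (ht : ∀ k < n, t k ≤ t (k + 1)) (hint : ∀ k < n, IntervalIntegrable h volume (t k) (t (k + 1)))
    (hle : ∀ k < n, ∀ u ∈ Icc (t k) (t (k + 1)), h u ≤ c k) :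
    ∫ u in t 0..t n, h u ≤ ∑ k ∈ Finset.range n, c k * (t (k + 1) - t k) := by
  rw [← intervalIntegral.sum_integral_adjacent_intervals hint]
  refine Finset.sum_le_sum fun k hk => ?_
  rw [Finset.mem_range] at hk
  calc ∫ u in t k..t (k + 1), h u ≤ ∫ _ in t k..t (k + 1), c k :=
        intervalIntegral.integral_mono_on (ht k hk) (hint k hk) intervalIntegrable_const (hle k hk)
    _ = c k * (t (k + 1) - t k) := by simp [mul_comm]

lemma eq_sub_integral_of_sub_le_integral {φ h : ℝ → ℝ} {T : ℝ}
    (hh : IntervalIntegrable h volume 0 T)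
    (hup : ∀ a b, 0 ≤ a → a ≤ b → b ≤ T → φ a - φ b ≤ ∫ u in a..b, h u)
    (hend : ∫ u in 0..T, h u ≤ φ 0 - φ T) {t : ℝ} (ht : t ∈ Icc 0 T) :
    φ t = φ 0 - ∫ u in 0..t, h u := by
  have hsplit := intervalIntegral.integral_add_adjacent_intervals
    (hh.mono_set (uIcc_subset_uIcc left_mem_uIcc (mem_uIcc_of_le ht.1 ht.2)))
    (hh.mono_set (uIcc_subset_uIcc (mem_uIcc_of_le ht.1 ht.2) right_mem_uIcc))
  linarith [hup 0 t le_rfl ht.1 ht.2, hup t T ht.1 ht.2 le_rfl]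

section Limit

variable {X : Type*} [MetricSpace X]

/-- Pointwise limits along an ultrafilter replace the diagonal argument of Arzelà–Ascoli. -/
theorem exists_lipschitzOnWith_tendstoUniformlyOn {α ι : Type*} [PseudoMetricSpace α]
    {l : Filter ι} [l.NeBot] {s : Set α} (hs : IsCompact s) {K : Set X} (hK : IsCompact K)
    {g : ι → α → X} (hgK : ∀ i, ∀ u ∈ s, g i u ∈ K) {ε : ι → ℝ} (hε : Tendsto ε l (𝓝 0))
    (hg : ∀ i, ∀ u ∈ s, ∀ v ∈ s, dist (g i u) (g i v) ≤ dist u v + ε i) :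
    ∃ γ : α → X, ∃ U : Ultrafilter ι, ↑U ≤ l ∧ LipschitzOnWith 1 γ s ∧
      TendstoUniformlyOn g γ U s := by
  classical
  set U := Ultrafilter.of l
  have hU : ↑U ≤ l := Ultrafilter.of_le l
  have hεU := hε.mono_left hU
  have hlim : ∀ u ∈ s, ∃ y, Tendsto (fun i => g i u) U (𝓝 y) := fun u hu => by
    obtain ⟨y, -, hy⟩ := hK.ultrafilter_le_nhds (U.map fun i => g i u)
      (by
        rw [Ultrafilter.coe_map, le_principal_iff]
        exact mem_map.2 (univ_mem' fun i => hgK i u hu))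
    exact ⟨y, hy⟩
  choose γ' hγ' using hlim
  obtain ⟨i₀⟩ := l.nonempty_of_neBot
  set γ : α → X := fun u => if hu : u ∈ s then γ' u hu else g i₀ u
  have hγ : ∀ u ∈ s, Tendsto (fun i => g i u) U (𝓝 (γ u)) := fun u hu => by
    simpa [γ, hu] using hγ' u hu
  have hlip : LipschitzOnWith 1 γ s := LipschitzOnWith.of_dist_le_mul fun u hu v hv => by
    simpa using le_of_tendsto_of_tendsto' ((hγ u hu).dist (hγ v hv))
      (tendsto_const_nhds.add hεU) (hg · u hu v hv)
  refine ⟨γ, U, hU, hlip, Metric.tendstoUniformlyOn_iff.2 fun η hη => ?_⟩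
  obtain ⟨c, hcs, hcfin, hcover⟩ := finite_cover_balls_of_compact hs (by positivity : 0 < η / 4)
  have hnet : ∀ᶠ i in U, ∀ a ∈ c, dist (γ a) (g i a) < η / 4 :=
    hcfin.eventually_all.2 fun a ha => (Metric.tendsto_nhds.1 (hγ a (hcs ha)) (η / 4)
      (by positivity)).mono fun i hi => by rwa [dist_comm]
  filter_upwards [hnet, hεU.eventually (eventually_lt_nhds (by positivity : 0 < η / 4))]
    with i hi hεi u hu
  obtain ⟨a, ha, hua⟩ := mem_iUnion₂.1 (hcover hu)
  rw [mem_ball] at hua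
  calc dist (γ u) (g i u) ≤ dist (γ u) (γ a) + dist (γ a) (g i a) + dist (g i a) (g i u) :=
        dist_triangle4 _ _ _ _
    _ < η / 4 + η / 4 + (η / 4 + η / 4) := by
        gcongr
        · exact (hlip.dist_le_mul u hu a (hcs ha)).trans_lt (by simpa using hua)
        · exact hi a ha
        · exact (hg i a (hcs ha) u hu).trans_lt (by rw [dist_comm]; linarith)
    _ = η := by ring

end Limit

section Endpoint

variable {X : Type*} [MetricSpace X] {f : X → ℝ}

lemma sum_mul_dist_le_of_isDescentStep {ε : ℝ} {z : ℕ → X} {n : ℕ}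
    (hz : ∀ k < n, IsDescentStep f ε (z k) (z (k + 1))) :
    ∑ k ∈ Finset.range n, ((locSlope f (z k)).toReal - ε) * dist (z k) (z (k + 1)) ≤
      f (z 0) - f (z n) :=
  (Finset.sum_le_sum fun k hk => (hz k (Finset.mem_range.1 hk)).2.2).trans_eq
    (Finset.sum_range_sub' (fun k => f (z k)) n)

lemma integral_le_of_isDescentChain {ε δ L M : ℝ} {x : X} {m : ℕ} {z : ℕ → X}
    (hz : IsDescentChain f ε L x m z) (hε : 0 ≤ ε) (hεδ : 0 ≤ ε + δ) (hL : 0 ≤ L) {h : ℝ → ℝ}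
    (hint : IntervalIntegrable h volume 0 L) (hM : ∀ u ∈ Icc 0 L, h u ≤ M) (hM0 : 0 ≤ M)
    (hclose : ∀ k < m, ∀ u ∈ Icc (chainLength z k) (chainLength z (k + 1)), u ≤ L →
      h u ≤ (locSlope f (z k)).toReal + δ) :
    ∫ u in 0..L, h u ≤ f x - f (chainParam z m L) + (ε + δ) * L + M * ε := by
  set t := chainLength z
  set J := chainIndex z m L
  have hJm : J ≤ m := Nat.findGreatest_le m
  have htJ : t J ≤ L := chainLength_chainIndex_le z m hL
  have htJ' : L - ε ≤ t J :=
    sub_le_chainLength_chainIndex hε (fun k hk => (hz.step k hk).2.1) hz.le_chainLength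
  have hint' : ∀ a b, 0 ≤ a → a ≤ b → b ≤ L → IntervalIntegrable h volume a b :=
    fun a b ha hab hb => hint.mono_set (by
      rw [uIcc_of_le hL, uIcc_of_le hab]
      exact Icc_subset_Icc ha hb)
  have htJk : ∀ k < J, t (k + 1) ≤ L := fun k hk => (chainLength_mono z hk).trans htJ
  have hhead : ∫ u in 0..t J, h u ≤
      ∑ k ∈ Finset.range J, ((locSlope f (z k)).toReal + δ) * (t (k + 1) - t k) := by
    have := integral_le_sum_mul_of_le_on_Icc (h := h) (t := t)
      (fun k _ => chainLength_mono z k.le_succ)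
      (fun k hk => hint' _ _ (chainLength_nonneg z k) (chainLength_mono z k.le_succ) (htJk k hk))
      (fun k hk u hu => hclose k (hk.trans_le hJm) u hu (hu.2.trans (htJk k hk)))
    rwa [show t 0 = 0 from chainLength_zero z] at this
  have htail : ∫ u in t J..L, h u ≤ M * ε :=
    calc ∫ u in t J..L, h u ≤ ∫ _ in t J..L, M :=
          intervalIntegral.integral_mono_on htJ (hint' _ _ (chainLength_nonneg z J) htJ le_rfl)
            intervalIntegrable_const fun u hu => hM u ⟨(chainLength_nonneg z J).trans hu.1, hu.2⟩
      _ = M * (L - t J) := by simp [mul_comm]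
      _ ≤ M * ε := by gcongr; linarith
  have hdesc := sum_mul_dist_le_of_isDescentStep fun k (hk : k < J) => hz.step k (hk.trans_le hJm)
  have hsum : ∑ k ∈ Finset.range J, ((locSlope f (z k)).toReal + δ) * (t (k + 1) - t k) =
      ∑ k ∈ Finset.range J, ((locSlope f (z k)).toReal - ε) * dist (z k) (z (k + 1)) +
        (ε + δ) * t J := by
    simp only [t, chainLength_succ, add_sub_cancel_left, chainLength, Finset.mul_sum,
      ← Finset.sum_add_distrib]
    exact Finset.sum_congr rfl fun k _ => by ring
  rw [← intervalIntegral.integral_add_adjacent_intervals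
    (hint' _ _ le_rfl (chainLength_nonneg z J) htJ) (hint' _ _ (chainLength_nonneg z J) htJ le_rfl)]
  rw [hz.apply_zero] at hdesc
  have : (ε + δ) * t J ≤ (ε + δ) * L := mul_le_mul_of_nonneg_left htJ hεδ
  change _ ≤ f x - f (z J) + _ + _
  linarith

end Endpoint

section Curve

variable {X : Type*} [MetricSpace X] [ProperSpace X] {f : X → ℝ} {x : X} {L : ℝ} {ε : ℕ → ℝ}
  {m : ℕ → ℕ} {z : ℕ → ℕ → X} {U : Filter ℕ} {γ : ℝ → X}

lemma eventually_locSlope_le_of_tendstoUniformlyOn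
    (hcont : Continuous fun x => (locSlope f x).toReal)
    (hz : ∀ n, IsDescentChain f (ε n) L x (m n) (z n)) (hε0 : ∀ n, 0 ≤ ε n)
    (hεU : Tendsto ε U (𝓝 0)) (hγ : LipschitzOnWith 1 γ (Icc 0 L)) (hγ0 : γ 0 = x)
    (hγU : TendstoUniformlyOn (fun n => chainParam (z n) (m n)) γ U (Icc 0 L))
    {δ : ℝ} (hδ : 0 < δ) :
    ∀ᶠ n in U, ∀ k < m n, ∀ u ∈ Icc (chainLength (z n) k) (chainLength (z n) (k + 1)), u ≤ L →
      (locSlope f (γ u)).toReal ≤ (locSlope f (z n k)).toReal + δ := by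
  obtain ⟨ρ, hρ, hunif⟩ := Metric.uniformContinuousOn_iff.1
    ((isCompact_closedBall x L).uniformContinuousOn_of_continuous hcont.continuousOn) δ hδ
  filter_upwards [Metric.tendstoUniformlyOn_iff.1 hγU (ρ / 2) (half_pos hρ),
    hεU.eventually (eventually_lt_nhds (half_pos hρ))] with n hn hεn k hk u hu huL
  have huI : u ∈ Icc 0 L := ⟨(chainLength_nonneg _ k).trans hu.1, huL⟩
  have hγu : γ u ∈ closedBall x L := by
    rw [mem_closedBall, ← hγ0]
    have := hγ.dist_le_mul u huI 0 ⟨le_rfl, huI.1.trans huL⟩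
    rw [NNReal.coe_one, one_mul, Real.dist_eq, sub_zero, abs_of_nonneg huI.1] at this
    exact this.trans huL
  have hzk : z n k ∈ closedBall x L := by
    rw [mem_closedBall, dist_comm, ← (hz n).apply_zero]
    exact ((dist_le_chainLength _ k).trans hu.1).trans huL
  have hdist : dist (γ u) (z n k) < ρ :=
    calc dist (γ u) (z n k) ≤ dist (γ u) (chainParam (z n) (m n) u) +
          dist (chainParam (z n) (m n) u) (z n k) := dist_triangle _ _ _
      _ < ρ / 2 + ρ / 2 := add_lt_add_of_lt_of_le (hn u huI)
          ((dist_chainParam_le_of_mem_Icc (hε0 n) (fun j hj => ((hz n).step j hj).2.1) hk hu).trans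
            hεn.le)
      _ = ρ := add_halves ρ
  have := hunif _ hγu _ hzk hdist
  rw [Real.dist_eq] at this
  linarith [le_abs_self ((locSlope f (γ u)).toReal - (locSlope f (z n k)).toReal)]

theorem integral_locSlope_le_of_tendstoUniformlyOn [U.NeBot] (hf : Continuous f)
    (hcont : Continuous fun x => (locSlope f x).toReal) (hL : 0 ≤ L)
    (hz : ∀ n, IsDescentChain f (ε n) L x (m n) (z n)) (hε0 : ∀ n, 0 ≤ ε n)
    (hεU : Tendsto ε U (𝓝 0)) (hγ : LipschitzOnWith 1 γ (Icc 0 L)) (hγ0 : γ 0 = x)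
    (hγU : TendstoUniformlyOn (fun n => chainParam (z n) (m n)) γ U (Icc 0 L)) :
    ∫ u in 0..L, (locSlope f (γ u)).toReal ≤ f x - f (γ L) := by
  set h : ℝ → ℝ := fun u => (locSlope f (γ u)).toReal
  have hhc : ContinuousOn h (Icc 0 L) := hcont.comp_continuousOn hγ.continuousOn
  obtain ⟨M, hM⟩ := isCompact_Icc.bddAbove_image hhc
  have hM' : ∀ u ∈ Icc 0 L, h u ≤ M := fun u hu => hM (mem_image_of_mem h hu)
  have hM0 : 0 ≤ M := ENNReal.toReal_nonneg.trans (hM' 0 ⟨le_rfl, hL⟩)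
  have hend : Tendsto (fun n => f (chainParam (z n) (m n) L)) U (𝓝 (f (γ L))) :=
    (hf.tendsto _).comp (hγU.tendsto_at ⟨hL, le_rfl⟩)
  have key : ∀ δ > 0, ∫ u in 0..L, h u ≤ f x - f (γ L) + (1 + 2 * L + M) * δ := by
    intro δ hδ
    obtain ⟨n, hclose, hεn, hfn⟩ := ((eventually_locSlope_le_of_tendstoUniformlyOn hcont hz hε0
      hεU hγ hγ0 hγU hδ).and ((hεU.eventually (eventually_lt_nhds hδ)).and
      (hend.eventually (ball_mem_nhds _ hδ)))).exists
    have hchain := integral_le_of_isDescentChain (hz n) (hε0 n) (by linarith [hε0 n]) hL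
      (hhc.intervalIntegrable_of_Icc hL) hM' hM0 hclose
    rw [Real.dist_eq, abs_lt] at hfn
    have h₁ : (ε n + δ) * L ≤ 2 * δ * L := by gcongr; linarith
    have h₂ : M * ε n ≤ M * δ := by gcongr
    linarith
  have hC : 0 < 1 + 2 * L + M := by positivity
  refine le_of_forall_pos_le_add fun η hη => ?_
  simpa [mul_div_cancel₀ _ hC.ne'] using key (η / (1 + 2 * L + M)) (by positivity)

theorem exists_lipschitzOnWith_integral_locSlope_le (hf : Continuous f)
    (hcont : Continuous fun x => (locSlope f x).toReal) (hL : 0 ≤ L)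
    (hLx : ∀ y ∈ closedBall x L, locSlope f y ≠ 0) :
    ∃ γ : ℝ → X, LipschitzOnWith 1 γ (Icc 0 L) ∧ γ 0 = x ∧
      ∫ u in 0..L, (locSlope f (γ u)).toReal ≤ f x - f (γ L) := by
  have hε0 : ∀ n : ℕ, (0 : ℝ) < 1 / (n + 1) := fun n => Nat.one_div_pos_of_nat
  choose m z hz using fun n => exists_isDescentChain hf hcont (hε0 n) hLx
  have hLz : ∀ n, Icc 0 L ⊆ Icc 0 (chainLength (z n) (m n)) :=
    fun n => Icc_subset_Icc le_rfl (hz n).le_chainLength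
  obtain ⟨γ, U, hU, hγ, hγU⟩ := exists_lipschitzOnWith_tendstoUniformlyOn isCompact_Icc
    (isCompact_closedBall x L) (g := fun n => chainParam (z n) (m n))
    (fun n u hu => by
      rw [mem_closedBall, dist_comm, ← (hz n).apply_zero]
      exact (dist_chainParam_le _ _ hu.1).trans hu.2)
    tendsto_one_div_add_atTop_nhds_zero_nat
    (fun n u hu v hv => dist_chainParam_chainParam_le (hε0 n).le
      (fun k hk => ((hz n).step k hk).2.1) (hLz n hu) (hLz n hv))
  have hγ0 : γ 0 = x := tendsto_nhds_unique (hγU.tendsto_at ⟨le_rfl, hL⟩)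
    (by simp [(hz _).apply_zero])
  exact ⟨γ, hγ, hγ0, integral_locSlope_le_of_tendstoUniformlyOn hf hcont hL hz
    (fun n => (hε0 n).le) (tendsto_one_div_add_atTop_nhds_zero_nat.mono_left hU) hγ hγ0 hγU⟩

end Curve

/-- In a proper metric space, a continuous function with finite continuous
local slope admits steepest-descent-like curves from any point of nonzero slope. -/
theorem stmt10 {X : Type*} [MetricSpace X] [ProperSpace X] (f : X → ℝ) (hf : Continuous f)
    (hfin : ∀ x, locSlope f x ≠ ⊤)
    (hcont : Continuous fun x => (locSlope f x).toReal) :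
    ∀ x : X, locSlope f x ≠ 0 →
      ∃ T > (0:ℝ), ∃ γ : ℝ → X, LipschitzOnWith 1 γ (Set.Icc 0 T) ∧ γ 0 = x ∧
        ∀ t ∈ Set.Icc (0:ℝ) T,
          f (γ t) = f x - ∫ s in (0:ℝ)..t, (locSlope f (γ s)).toReal := by
  intro x hx
  obtain ⟨L, hL, hLx⟩ : ∃ L > 0, ∀ y ∈ closedBall x L, locSlope f y ≠ 0 := by
    obtain ⟨L, hL, hball⟩ := nhds_basis_closedBall.eventually_iff.1
      ((hcont.tendsto x).eventually_const_lt (ENNReal.toReal_pos hx (hfin x)))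
    exact ⟨L, hL, fun y hy h0 => by simpa [h0] using hball hy⟩
  obtain ⟨γ, hγ, hγ0, hdesc⟩ := exists_lipschitzOnWith_integral_locSlope_le hf hcont hL.le hLx
  refine ⟨L, hL, γ, hγ, hγ0, fun t ht => ?_⟩
  rw [← hγ0] at hdesc ⊢
  exact eq_sub_integral_of_sub_le_integral (φ := fun u => f (γ u))
    ((hcont.comp_continuousOn hγ.continuousOn).intervalIntegrable_of_Icc hL.le)
    (fun a b ha hab hb => sub_le_integral_locSlope hf hfin hcont
      (hγ.mono (Icc_subset_Icc ha hb)) hab) hdesc ht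
end

section
/- Let C ≥ 1, let (X,d) be a complete C-quasiconvex metric space, and for each n ∈ ℕ let r_n ∈ (0,1] and let d_n be a metric on [0,r_n] such that ([0,r_n],d_n) is C-quasiconvex. Let Q = {q_n : n ∈ ℕ} ⊂ X with the points q_n pairwise distinct, and let Z := {(x,y) ∈ X × [0,1] : y = 0 if x ∉ Q, and y ∈ [0,r_n] if x = q_n}. Define ρ on Z by: ρ((x₁,y₁),(x₂,y₂)) = d_n(y₁,y₂) if x₁ = x₂ = q_n; and otherwise ρ((x₁,y₁),(x₂,y₂)) = λ(x₁,y₁) + d(x₁,x₂) + λ(x₂,y₂), where λ(q_n,y) := d_n(y,0) and λ(x,0) := 0 for x ∉ Q. Then ρ is a metric on Z and (Z,ρ) is C-quasiconvex; if moreover each ([0,r_n],d_n) is complete, then (Z,ρ) is complete. -/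
/-!
On a fibre `{q n} × [0, r n]` the metric `ρ` is `d_n`, on the base `X × {0}` it is `d`, and two
points `z, w` in different fibres are joined through the base:
`ρ(z, w) = ρ(z, πz) + d(πz, πw) + ρ(πw, w)`, where `πz` is the foot of the fibre of `z`. Since the
intrinsic distance is subadditive and does not grow under isometric embeddings, quasiconvexity of
`X` and of the fibres gives quasiconvexity of `Z` with the same constant.

A Cauchy sequence in `Z` either ends up in one fibre, a complete isometric copy of `[0, r n]`, or
leaves every fibre infinitely often. In the second case its heights `λ` tend to `0`, because
`λ z ≤ ρ(z, w)` whenever `z` and `w` lie in different fibres, and it converges to the limit in `X`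
of its projections.
-/

open Filter Topology Set MeasureTheory
open scoped ENNReal NNReal

/-- The glued set `Z ⊆ X × ℝ`: the second coordinate is `0` off `Q = range q`, and lies in
`[0, r n]` over `q n`. -/
def Zset {X : Type*} [MetricSpace X] (r : ℕ → ℝ) (q : ℕ → X) : Set (X × ℝ) :=
  {p | (∀ n, p.1 = q n → p.2 ∈ Set.Icc 0 (r n)) ∧ (p.1 ∉ Set.range q → p.2 = 0)}

open Classical in
/-- The "height" `λ` of a point of `Z`: the `d_n`-distance of its fiber coordinate to `0`. -/
noncomputable def lamZ {X : Type*} [MetricSpace X] (r : ℕ → ℝ) (hr0 : ∀ n, 0 < r n)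
    (q : ℕ → X) (D : ∀ n, MetricSpace (Set.Icc (0:ℝ) (r n))) (z : Zset r q) : ℝ :=
  if h : ∃ n, (z : X × ℝ).1 = q n then
    @dist _ (D (Classical.choose h)).toDist
      ⟨(z : X × ℝ).2, z.2.1 _ (Classical.choose_spec h)⟩
      ⟨0, Set.left_mem_Icc.mpr (hr0 _).le⟩
  else 0

open Classical in
/-- The glued distance `ρ` on `Z`. -/
noncomputable def rhoZ {X : Type*} [MetricSpace X] (r : ℕ → ℝ) (hr0 : ∀ n, 0 < r n)
    (q : ℕ → X) (D : ∀ n, MetricSpace (Set.Icc (0:ℝ) (r n))) (z w : Zset r q) : ℝ :=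
  if h : ∃ n, (z : X × ℝ).1 = q n ∧ (w : X × ℝ).1 = q n then
    @dist _ (D (Classical.choose h)).toDist
      ⟨(z : X × ℝ).2, z.2.1 _ (Classical.choose_spec h).1⟩
      ⟨(w : X × ℝ).2, w.2.1 _ (Classical.choose_spec h).2⟩
  else lamZ r hr0 q D z + dist (z : X × ℝ).1 (w : X × ℝ).1 + lamZ r hr0 q D w

section IntrinsicDist

variable {A : Type*} [PseudoMetricSpace A]

theorem intrinsicDist_le_eVariationOn {x y : A} {T : ℝ} (hT : 0 ≤ T) {γ : ℝ → A}
    (hγ : ContinuousOn γ (Icc 0 T)) (h0 : γ 0 = x) (hT' : γ T = y) :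
    intrinsicDist x y ≤ eVariationOn γ (Icc 0 T) :=
  iInf₂_le_of_le T hT <| iInf₂_le_of_le γ hγ <| iInf₂_le_of_le h0 hT' le_rfl

theorem le_intrinsicDist {x y : A} {a : ℝ≥0∞}
    (h : ∀ T, 0 ≤ T → ∀ γ : ℝ → A, ContinuousOn γ (Icc 0 T) → γ 0 = x → γ T = y →
      a ≤ eVariationOn γ (Icc 0 T)) :
    a ≤ intrinsicDist x y :=
  le_iInf₂ fun T hT => le_iInf₂ fun γ hγ => le_iInf₂ fun h0 hT' => h T hT γ hγ h0 hT'

theorem intrinsicDist_self (x : A) : intrinsicDist x x = 0 :=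
  nonpos_iff_eq_zero.1 <| (intrinsicDist_le_eVariationOn le_rfl continuousOn_const rfl rfl).trans
    (eVariationOn.subsingleton _ (by simp)).le

theorem LipschitzWith.intrinsicDist_le {B : Type*} [PseudoMetricSpace B] {f : A → B}
    (hf : LipschitzWith 1 f) (x y : A) : intrinsicDist (f x) (f y) ≤ intrinsicDist x y :=
  le_intrinsicDist fun T hT γ hγ h0 hT' =>
    (intrinsicDist_le_eVariationOn hT (hf.continuous.comp_continuousOn hγ)
      (by simp [h0]) (by simp [hT'])).trans <| by
        simpa using hf.lipschitzOnWith.comp_eVariationOn_le (mapsTo_univ γ _)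

theorem intrinsicDist_comm (x y : A) : intrinsicDist x y = intrinsicDist y x := by
  suffices ∀ x y : A, intrinsicDist y x ≤ intrinsicDist x y from le_antisymm (this y x) (this x y)
  refine fun x y => le_intrinsicDist fun T hT γ hγ h0 hT' => ?_
  have hmaps : MapsTo (fun t => T - t) (Icc 0 T) (Icc 0 T) := fun t ht =>
    ⟨by linarith [ht.2], by linarith [ht.1]⟩
  calc intrinsicDist y x ≤ eVariationOn (γ ∘ fun t => T - t) (Icc 0 T) :=
        intrinsicDist_le_eVariationOn hT (hγ.comp (by fun_prop) hmaps) (by simpa) (by simpa)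
    _ ≤ eVariationOn γ (Icc 0 T) :=
        eVariationOn.comp_le_of_antitoneOn γ _ (fun _ _ _ _ hab => sub_le_sub_left hab T) hmaps

theorem intrinsicDist_le_eVariationOn_add {x y z : A} {T₁ T₂ : ℝ} (hT₁ : 0 ≤ T₁) (hT₂ : 0 ≤ T₂)
    {γ₁ γ₂ : ℝ → A} (hγ₁ : ContinuousOn γ₁ (Icc 0 T₁)) (hγ₂ : ContinuousOn γ₂ (Icc 0 T₂))
    (h₁0 : γ₁ 0 = x) (h₁T : γ₁ T₁ = y) (h₂0 : γ₂ 0 = y) (h₂T : γ₂ T₂ = z) :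
    intrinsicDist x z ≤ eVariationOn γ₁ (Icc 0 T₁) + eVariationOn γ₂ (Icc 0 T₂) := by
  set γ : ℝ → A := fun t => if t ≤ T₁ then γ₁ t else γ₂ (t - T₁)
  have hmaps : MapsTo (fun t => t - T₁) (Icc T₁ (T₁ + T₂)) (Icc 0 T₂) := fun t ht =>
    ⟨by linarith [ht.1], by linarith [ht.2]⟩
  have hle : T₁ ≤ T₁ + T₂ := le_add_of_nonneg_right hT₂
  have eq₁ : EqOn γ γ₁ (Icc 0 T₁) := fun t ht => if_pos ht.2
  have eq₂ : EqOn γ (γ₂ ∘ fun t => t - T₁) (Icc T₁ (T₁ + T₂)) := by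
    intro t ht
    rcases ht.1.eq_or_lt with rfl | h
    · simp [γ, h₁T, h₂0]
    · simp [γ, not_le.2 h]
  have hγ : ContinuousOn γ (Icc 0 (T₁ + T₂)) := by
    rw [← Icc_union_Icc_eq_Icc hT₁ hle]
    exact (hγ₁.congr eq₁).union_of_isClosed
      ((hγ₂.comp (by fun_prop) hmaps).congr eq₂) isClosed_Icc isClosed_Icc
  calc intrinsicDist x z ≤ eVariationOn γ (Icc 0 (T₁ + T₂)) :=
        intrinsicDist_le_eVariationOn (hT₁.trans hle) hγ (by simp [γ, hT₁, h₁0])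
          (by rw [eq₂ ⟨hle, le_rfl⟩]; simp [h₂T])
    _ = eVariationOn γ (Icc 0 T₁) + eVariationOn γ (Icc T₁ (T₁ + T₂)) := by
        simpa using (eVariationOn.Icc_add_Icc γ (s := univ) hT₁ hle (mem_univ _)).symm
    _ ≤ eVariationOn γ₁ (Icc 0 T₁) + eVariationOn γ₂ (Icc 0 T₂) := by
        rw [eVariationOn.eq_of_eqOn eq₁, eVariationOn.eq_of_eqOn eq₂]
        gcongr
        exact eVariationOn.comp_le_of_monotoneOn γ₂ _
          (fun _ _ _ _ hab => sub_le_sub_right hab T₁) hmaps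

theorem intrinsicDist_triangle (x y z : A) :
    intrinsicDist x z ≤ intrinsicDist x y + intrinsicDist y z :=
  ENNReal.le_iInf₂_add_iInf₂ fun _ hT₁ _ hT₂ =>
    ENNReal.le_iInf₂_add_iInf₂ fun _ hγ₁ _ hγ₂ =>
      ENNReal.le_iInf₂_add_iInf₂ fun h₁0 h₁T h₂0 h₂T =>
        intrinsicDist_le_eVariationOn_add hT₁ hT₂ hγ₁ hγ₂ h₁0 h₁T h₂0 h₂T

theorem intrinsicDist_le_ofReal_mul_add {x y z : A} {C a b : ℝ} (hC : 0 ≤ C) (ha : 0 ≤ a)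
    (hb : 0 ≤ b) (hxy : intrinsicDist x y ≤ ENNReal.ofReal (C * a))
    (hyz : intrinsicDist y z ≤ ENNReal.ofReal (C * b)) :
    intrinsicDist x z ≤ ENNReal.ofReal (C * (a + b)) := by
  rw [mul_add, ENNReal.ofReal_add (by positivity) (by positivity)]
  exact (intrinsicDist_triangle x y z).trans (add_le_add hxy hyz)

end IntrinsicDist

namespace Zset

-- Here `Zset r q` and the fibres `Icc 0 (r n)` carry the metrics `ρ` and `d_n`, never the subspace
-- structures coming from `X × ℝ` and `ℝ`.
attribute [-instance] Subtype.pseudoMetricSpace Subtype.metricSpace instPseudoEMetricSpaceSubtype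
  instEMetricSpaceSubtype instUniformSpaceSubtype instTopologicalSpaceSubtype

variable {X : Type*} [MetricSpace X] {r : ℕ → ℝ} {hr0 : ∀ n, 0 < r n} {q : ℕ → X}
  {D : ∀ n, MetricSpace (Icc (0:ℝ) (r n))}

def SameFiber (q : ℕ → X) (z w : Zset r q) : Prop :=
  ∃ n, (z : X × ℝ).1 = q n ∧ (w : X × ℝ).1 = q n

theorem SameFiber.symm {z w : Zset r q} (h : SameFiber q z w) : SameFiber q w z :=
  let ⟨n, hz, hw⟩ := h; ⟨n, hw, hz⟩

theorem SameFiber.trans {z v w : Zset r q} (hzv : SameFiber q z v) (hvw : SameFiber q v w) :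
    SameFiber q z w :=
  let ⟨_, hz, hv⟩ := hzv; let ⟨m, hv', hw⟩ := hvw; ⟨m, hz.trans (hv.symm.trans hv'), hw⟩

theorem SameFiber.fst_eq {z w : Zset r q} (h : SameFiber q z w) :
    (z : X × ℝ).1 = (w : X × ℝ).1 :=
  let ⟨_, hz, hw⟩ := h; hz.trans hw.symm

def ofBase (hr0 : ∀ n, 0 < r n) (x : X) : Zset r q :=
  ⟨(x, 0), fun n _ => left_mem_Icc.2 (hr0 n).le, fun _ => rfl⟩

def ofFiber (hq : Function.Injective q) (n : ℕ) (a : Icc (0:ℝ) (r n)) : Zset r q :=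
  ⟨(q n, a), fun _ hm => hq hm ▸ a.2, fun h => (h ⟨n, rfl⟩).elim⟩

theorem ofBase_fst_eq_self {z : Zset r q} (h : ¬∃ n, (z : X × ℝ).1 = q n) :
    ofBase hr0 (z : X × ℝ).1 = z :=
  Subtype.ext <| Prod.ext rfl (z.2.2 fun ⟨n, hn⟩ => h ⟨n, hn.symm⟩).symm

theorem exists_ofFiber_eq (hq : Function.Injective q) {z : Zset r q} {n : ℕ}
    (h : (z : X × ℝ).1 = q n) : ∃ a, ofFiber hq n a = z :=
  ⟨⟨(z : X × ℝ).2, z.2.1 n h⟩, Subtype.ext <| Prod.ext h.symm rfl⟩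

theorem lamZ_nonneg (z : Zset r q) : 0 ≤ lamZ r hr0 q D z := by
  unfold lamZ
  split_ifs with h
  · exact @dist_nonneg _ (D _).toPseudoMetricSpace _ _
  · exact le_rfl

theorem lamZ_eq_zero_of_not_exists {z : Zset r q} (h : ¬∃ n, (z : X × ℝ).1 = q n) :
    lamZ r hr0 q D z = 0 :=
  dif_neg h

theorem lamZ_ofFiber (hq : Function.Injective q) (n : ℕ) (a : Icc (0:ℝ) (r n)) :
    lamZ r hr0 q D (ofFiber hq n a) = @dist _ (D n).toDist a ⟨0, left_mem_Icc.2 (hr0 n).le⟩ := by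
  suffices ∀ (z : Zset r q) (hz : (z : X × ℝ).1 = q n), lamZ r hr0 q D z =
      @dist _ (D n).toDist ⟨(z : X × ℝ).2, z.2.1 n hz⟩ ⟨0, left_mem_Icc.2 (hr0 n).le⟩ from
    this _ rfl
  intro z hz
  have h : ∃ m, (z : X × ℝ).1 = q m := ⟨n, hz⟩
  rw [lamZ, dif_pos h]
  obtain rfl : n = Classical.choose h := hq (hz.symm.trans (Classical.choose_spec h))
  rfl

theorem lamZ_ofBase (x : X) : lamZ r hr0 q D (ofBase hr0 x) = 0 := by
  unfold lamZ
  split_ifs with h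
  · exact @dist_self _ (D _).toPseudoMetricSpace _
  · rfl

theorem rhoZ_ofFiber (hq : Function.Injective q) (n : ℕ) (a b : Icc (0:ℝ) (r n)) :
    rhoZ r hr0 q D (ofFiber hq n a) (ofFiber hq n b) = @dist _ (D n).toDist a b := by
  suffices ∀ (z w : Zset r q) (hz : (z : X × ℝ).1 = q n) (hw : (w : X × ℝ).1 = q n),
      rhoZ r hr0 q D z w =
        @dist _ (D n).toDist ⟨(z : X × ℝ).2, z.2.1 n hz⟩ ⟨(w : X × ℝ).2, w.2.1 n hw⟩ from
    this _ _ rfl rfl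
  intro z w hz hw
  have h : ∃ m, (z : X × ℝ).1 = q m ∧ (w : X × ℝ).1 = q m := ⟨n, hz, hw⟩
  rw [rhoZ, dif_pos h]
  obtain rfl : n = Classical.choose h := hq (hz.symm.trans (Classical.choose_spec h).1)
  rfl

theorem rhoZ_of_not_sameFiber {z w : Zset r q} (h : ¬SameFiber q z w) :
    rhoZ r hr0 q D z w = lamZ r hr0 q D z + dist (z : X × ℝ).1 (w : X × ℝ).1 + lamZ r hr0 q D w :=
  dif_neg h

theorem SameFiber.exists_ofFiber_eq (hq : Function.Injective q) {z w : Zset r q}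
    (h : SameFiber q z w) : ∃ n a b, ofFiber hq n a = z ∧ ofFiber hq n b = w := by
  obtain ⟨n, hz, hw⟩ := h
  obtain ⟨a, rfl⟩ := Zset.exists_ofFiber_eq hq hz
  obtain ⟨b, rfl⟩ := Zset.exists_ofFiber_eq hq hw
  exact ⟨n, a, b, rfl, rfl⟩

theorem lamZ_le_rhoZ_of_not_sameFiber {z w : Zset r q} (h : ¬SameFiber q z w) :
    lamZ r hr0 q D z ≤ rhoZ r hr0 q D z w := by
  rw [rhoZ_of_not_sameFiber h, add_assoc]
  exact le_add_of_nonneg_right (add_nonneg dist_nonneg (lamZ_nonneg w))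

theorem rhoZ_le_lamZ_add_dist_add_lamZ (hq : Function.Injective q) (z w : Zset r q) :
    rhoZ r hr0 q D z w ≤
      lamZ r hr0 q D z + dist (z : X × ℝ).1 (w : X × ℝ).1 + lamZ r hr0 q D w := by
  by_cases h : SameFiber q z w
  · rw [h.fst_eq, dist_self, add_zero]
    obtain ⟨n, a, b, rfl, rfl⟩ := h.exists_ofFiber_eq hq
    let := D n
    rw [rhoZ_ofFiber, lamZ_ofFiber, lamZ_ofFiber]
    exact dist_triangle_right a b _
  · exact (rhoZ_of_not_sameFiber h).le

theorem dist_fst_add_abs_sub_le_rhoZ (hq : Function.Injective q) (z w : Zset r q) :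
    dist (z : X × ℝ).1 (w : X × ℝ).1 + |lamZ r hr0 q D z - lamZ r hr0 q D w| ≤
      rhoZ r hr0 q D z w := by
  by_cases h : SameFiber q z w
  · rw [h.fst_eq, dist_self, zero_add]
    obtain ⟨n, a, b, rfl, rfl⟩ := h.exists_ofFiber_eq hq
    let := D n
    rw [rhoZ_ofFiber, lamZ_ofFiber, lamZ_ofFiber]
    exact abs_dist_sub_le a b _
  · rw [rhoZ_of_not_sameFiber h]
    rcases abs_cases (lamZ r hr0 q D z - lamZ r hr0 q D w) with ⟨habs, -⟩ | ⟨habs, -⟩ <;>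
      linarith [lamZ_nonneg (hr0 := hr0) (D := D) z, lamZ_nonneg (hr0 := hr0) (D := D) w]

theorem rhoZ_self (hq : Function.Injective q) (z : Zset r q) : rhoZ r hr0 q D z z = 0 := by
  by_cases h : ∃ n, (z : X × ℝ).1 = q n
  · obtain ⟨n, hn⟩ := h
    obtain ⟨a, rfl⟩ := exists_ofFiber_eq hq hn
    rw [rhoZ_ofFiber]
    exact @dist_self _ (D n).toPseudoMetricSpace a
  · rw [rhoZ_of_not_sameFiber fun ⟨n, hn, _⟩ => h ⟨n, hn⟩, lamZ_eq_zero_of_not_exists h]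
    simp

theorem rhoZ_comm (hq : Function.Injective q) (z w : Zset r q) :
    rhoZ r hr0 q D z w = rhoZ r hr0 q D w z := by
  by_cases h : SameFiber q z w
  · obtain ⟨n, a, b, rfl, rfl⟩ := h.exists_ofFiber_eq hq
    rw [rhoZ_ofFiber, rhoZ_ofFiber]
    exact @dist_comm _ (D n).toPseudoMetricSpace a b
  · rw [rhoZ_of_not_sameFiber h, rhoZ_of_not_sameFiber (mt SameFiber.symm h), dist_comm]
    ring

theorem rhoZ_triangle (hq : Function.Injective q) (z v w : Zset r q) :
    rhoZ r hr0 q D z w ≤ rhoZ r hr0 q D z v + rhoZ r hr0 q D v w := by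
  have hz : 0 ≤ lamZ r hr0 q D z := lamZ_nonneg z
  have hv : 0 ≤ lamZ r hr0 q D v := lamZ_nonneg v
  have hw : 0 ≤ lamZ r hr0 q D w := lamZ_nonneg w
  have hzv := dist_fst_add_abs_sub_le_rhoZ (hr0 := hr0) (D := D) hq z v
  have hvw := dist_fst_add_abs_sub_le_rhoZ (hr0 := hr0) (D := D) hq v w
  have hd := dist_triangle (z : X × ℝ).1 (v : X × ℝ).1 (w : X × ℝ).1
  by_cases hzw : SameFiber q z w
  · by_cases hzv' : SameFiber q z v
    · obtain ⟨n, a, c, rfl, rfl⟩ := hzw.exists_ofFiber_eq hq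
      obtain ⟨b, rfl⟩ := exists_ofFiber_eq hq (hzv'.fst_eq.symm)
      rw [rhoZ_ofFiber, rhoZ_ofFiber, rhoZ_ofFiber]
      exact @dist_triangle _ (D n).toPseudoMetricSpace a b c
    · have hvw' : ¬SameFiber q v w := fun h => hzv' (hzw.trans h.symm)
      rw [rhoZ_of_not_sameFiber hzv', rhoZ_of_not_sameFiber hvw']
      linarith [rhoZ_le_lamZ_add_dist_add_lamZ (hr0 := hr0) (D := D) hq z w,
        dist_le_zero.2 hzw.fst_eq, dist_nonneg (x := (z : X × ℝ).1) (y := (v : X × ℝ).1),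
        dist_nonneg (x := (v : X × ℝ).1) (y := (w : X × ℝ).1)]
  · rw [rhoZ_of_not_sameFiber hzw]
    rcases not_and_or.1 fun h : SameFiber q z v ∧ SameFiber q v w => hzw (h.1.trans h.2)
      with hzv' | hvw'
    · rw [rhoZ_of_not_sameFiber hzv']
      linarith [neg_abs_le (lamZ r hr0 q D v - lamZ r hr0 q D w)]
    · rw [rhoZ_of_not_sameFiber hvw']
      linarith [le_abs_self (lamZ r hr0 q D z - lamZ r hr0 q D v)]

theorem eq_of_rhoZ_eq_zero (hq : Function.Injective q) {z w : Zset r q}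
    (h : rhoZ r hr0 q D z w = 0) : z = w := by
  have hfst : (z : X × ℝ).1 = (w : X × ℝ).1 := dist_le_zero.1 <| by
    linarith [dist_fst_add_abs_sub_le_rhoZ (hr0 := hr0) (D := D) hq z w,
      abs_nonneg (lamZ r hr0 q D z - lamZ r hr0 q D w)]
  by_cases hz : ∃ n, (z : X × ℝ).1 = q n
  · obtain ⟨n, hn⟩ := hz
    obtain ⟨a, rfl⟩ := exists_ofFiber_eq hq hn
    obtain ⟨b, rfl⟩ := exists_ofFiber_eq hq (hfst.symm.trans hn)
    rw [rhoZ_ofFiber] at h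
    rw [@eq_of_dist_eq_zero _ (D n) _ _ h]
  · have hw : ¬∃ n, (w : X × ℝ).1 = q n := hfst ▸ hz
    rw [← ofBase_fst_eq_self (hr0 := hr0) hz, ← ofBase_fst_eq_self (hr0 := hr0) hw, hfst]

variable (hr0) in
noncomputable abbrev gluedMetricSpace (hq : Function.Injective q)
    (D : ∀ n, MetricSpace (Icc (0:ℝ) (r n))) : MetricSpace (Zset r q) where
  dist := rhoZ r hr0 q D
  dist_self := rhoZ_self hq
  dist_comm := rhoZ_comm hq
  dist_triangle := rhoZ_triangle hq
  eq_of_dist_eq_zero := eq_of_rhoZ_eq_zero hq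

theorem rhoZ_ofBase (hq : Function.Injective q) (x y : X) :
    rhoZ r hr0 q D (ofBase hr0 x) (ofBase hr0 y) = dist x y := by
  by_cases h : SameFiber q (ofBase hr0 x) (ofBase hr0 y)
  · obtain rfl : x = y := h.fst_eq
    rw [rhoZ_self hq, dist_self]
  · rw [rhoZ_of_not_sameFiber h, lamZ_ofBase, lamZ_ofBase, zero_add, add_zero]
    rfl

theorem rhoZ_ofBase_le (hq : Function.Injective q) (z : Zset r q) (x : X) :
    rhoZ r hr0 q D z (ofBase hr0 x) ≤ lamZ r hr0 q D z + dist (z : X × ℝ).1 x := by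
  have h := rhoZ_le_lamZ_add_dist_add_lamZ (hr0 := hr0) (D := D) hq z (ofBase hr0 x)
  rwa [lamZ_ofBase, add_zero] at h

theorem intrinsicDist_le_ofReal_mul_rhoZ {C : ℝ} (hC : 0 ≤ C)
    (hX : ∀ x y : X, intrinsicDist x y ≤ ENNReal.ofReal (C * dist x y))
    (hq : Function.Injective q)
    (hD : ∀ n, ∀ a b : Icc (0:ℝ) (r n), @intrinsicDist _ (D n).toPseudoMetricSpace a b
      ≤ ENNReal.ofReal (C * @dist _ (D n).toDist a b))
    (z w : Zset r q) :
    @intrinsicDist _ (gluedMetricSpace hr0 hq D).toPseudoMetricSpace z w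
      ≤ ENNReal.ofReal (C * rhoZ r hr0 q D z w) := by
  let := gluedMetricSpace hr0 hq D
  have hfiber {z w : Zset r q} (h : SameFiber q z w) :
      intrinsicDist z w ≤ ENNReal.ofReal (C * rhoZ r hr0 q D z w) := by
    obtain ⟨n, a, b, rfl, rfl⟩ := h.exists_ofFiber_eq hq
    let := D n
    rw [rhoZ_ofFiber]
    exact ((Isometry.of_dist_eq (rhoZ_ofFiber hq n)).lipschitz.intrinsicDist_le a b).trans
      (hD n a b)
  have hbase (z : Zset r q) :
      intrinsicDist z (ofBase hr0 (z : X × ℝ).1) ≤ ENNReal.ofReal (C * lamZ r hr0 q D z) := by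
    by_cases hz : ∃ n, (z : X × ℝ).1 = q n
    · obtain ⟨n, hn⟩ := hz
      refine (hfiber (w := ofBase hr0 (z : X × ℝ).1) ⟨n, hn, hn⟩).trans <|
        ENNReal.ofReal_le_ofReal <| mul_le_mul_of_nonneg_left ?_ hC
      simpa using rhoZ_ofBase_le hq z (z : X × ℝ).1
    · rw [ofBase_fst_eq_self hz, intrinsicDist_self]
      exact zero_le
  by_cases h : SameFiber q z w
  · exact hfiber h
  rw [rhoZ_of_not_sameFiber h]
  refine intrinsicDist_le_ofReal_mul_add hC (add_nonneg (lamZ_nonneg z) dist_nonneg) (lamZ_nonneg w)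
    (intrinsicDist_le_ofReal_mul_add hC (lamZ_nonneg z) dist_nonneg (hbase z) ?_)
    (intrinsicDist_comm w _ ▸ hbase w)
  exact ((Isometry.of_dist_eq (rhoZ_ofBase hq)).lipschitz.intrinsicDist_le _ _).trans (hX _ _)

theorem tendsto_lamZ_zero {u : ℕ → Zset r q}
    (hu : ∀ ε > 0, ∃ N, ∀ k ≥ N, ∀ l ≥ N, rhoZ r hr0 q D (u k) (u l) < ε)
    (hfib : ∀ n, ∃ᶠ k in atTop, (u k : X × ℝ).1 ≠ q n) :
    Tendsto (fun k => lamZ r hr0 q D (u k)) atTop (𝓝 0) := by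
  refine Metric.tendsto_atTop.2 fun ε hε => ?_
  obtain ⟨N, hN⟩ := hu ε hε
  refine ⟨N, fun k hk => ?_⟩
  rw [Real.dist_0_eq_abs, abs_of_nonneg (lamZ_nonneg _)]
  by_cases hk' : ∃ n, (u k : X × ℝ).1 = q n
  · obtain ⟨n, hn⟩ := hk'
    obtain ⟨l, hl, hln⟩ := ((eventually_ge_atTop N).and_frequently (hfib n)).exists
    have : ¬SameFiber q (u k) (u l) := fun h => hln (h.fst_eq ▸ hn)
    exact (lamZ_le_rhoZ_of_not_sameFiber this).trans_lt (hN k hk l hl)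
  · rwa [lamZ_eq_zero_of_not_exists hk']

theorem completeSpace_gluedMetricSpace [CompleteSpace X] (hq : Function.Injective q)
    (hD : ∀ n, @CompleteSpace _ (D n).toUniformSpace) :
    @CompleteSpace _ (gluedMetricSpace hr0 hq D).toUniformSpace := by
  let := gluedMetricSpace hr0 hq D
  refine Metric.complete_of_cauchySeq_tendsto fun u hu => ?_
  by_cases hfib : ∃ n, ∀ᶠ k in atTop, (u k : X × ℝ).1 = q n
  · obtain ⟨n, hn⟩ := hfib
    let := D n
    have := hD n
    obtain ⟨z, -, hz⟩ :=
      (Isometry.of_dist_eq (rhoZ_ofFiber hq n)).isUniformInducing.isComplete_range _ hu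
        (tendsto_principal.2 (hn.mono fun k hk => exists_ofFiber_eq hq hk))
    exact ⟨z, hz⟩
  · simp only [not_exists, not_eventually] at hfib
    have hfst : LipschitzWith 1 fun z : Zset r q => (z : X × ℝ).1 :=
      LipschitzWith.of_dist_le_mul fun z w => by
        rw [NNReal.coe_one, one_mul]
        exact (le_add_of_nonneg_right (abs_nonneg _)).trans (dist_fst_add_abs_sub_le_rhoZ hq z w)
    obtain ⟨x, hx⟩ := cauchySeq_tendsto_of_complete (hfst.uniformContinuous.comp_cauchySeq hu)
    refine ⟨ofBase hr0 x, tendsto_iff_dist_tendsto_zero.2 <|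
      squeeze_zero (fun _ => dist_nonneg) (fun k => rhoZ_ofBase_le hq (u k) x) ?_⟩
    simpa using (tendsto_lamZ_zero (Metric.cauchySeq_iff.1 hu) hfib).add
      (tendsto_iff_dist_tendsto_zero.1 hx)

end Zset

theorem stmt13_general {X : Type*} [MetricSpace X] [CompleteSpace X] (C : ℝ) (hC : 1 ≤ C)
    (hX : ∀ x y : X, intrinsicDist x y ≤ ENNReal.ofReal (C * dist x y))
    (r : ℕ → ℝ) (hr0 : ∀ n, 0 < r n)
    (D : ∀ n, MetricSpace (Set.Icc (0:ℝ) (r n)))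
    (hD : ∀ n, ∀ a b : Set.Icc (0:ℝ) (r n),
      @intrinsicDist _ (D n).toPseudoMetricSpace a b
        ≤ ENNReal.ofReal (C * @dist _ (D n).toDist a b))
    (q : ℕ → X) (hq : Function.Injective q) :
    ∃ M : MetricSpace (Zset r q),
      (∀ z w : Zset r q, @dist _ M.toDist z w = rhoZ r hr0 q D z w) ∧
      (∀ z w : Zset r q,
        @intrinsicDist _ M.toPseudoMetricSpace z w
          ≤ ENNReal.ofReal (C * rhoZ r hr0 q D z w)) ∧
      ((∀ n, @CompleteSpace _ (D n).toUniformSpace) →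
        @CompleteSpace _ M.toUniformSpace) :=
  ⟨Zset.gluedMetricSpace hr0 hq D, fun _ _ => rfl,
    Zset.intrinsicDist_le_ofReal_mul_rhoZ (zero_le_one.trans hC) hX hq hD,
    Zset.completeSpace_gluedMetricSpace hq⟩

/-- **gluing lemma.** Gluing `C`-quasiconvex segments `([0,r_n], d_n)` to a
complete `C`-quasiconvex space `X` along a countable set `Q = {q_n}` produces a metric space
`(Z,ρ)` which is again `C`-quasiconvex, and complete if each `([0,r_n], d_n)` is complete. -/
theorem stmt13 {X : Type*} [MetricSpace X] [CompleteSpace X] (C : ℝ) (hC : 1 ≤ C)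
    (hX : ∀ x y : X, intrinsicDist x y ≤ ENNReal.ofReal (C * dist x y))
    (r : ℕ → ℝ) (hr0 : ∀ n, 0 < r n) (hr1 : ∀ n, r n ≤ 1)
    (D : ∀ n, MetricSpace (Set.Icc (0:ℝ) (r n)))
    (hD : ∀ n, ∀ a b : Set.Icc (0:ℝ) (r n),
      @intrinsicDist _ (D n).toPseudoMetricSpace a b
        ≤ ENNReal.ofReal (C * @dist _ (D n).toDist a b))
    (q : ℕ → X) (hq : Function.Injective q) :
    ∃ M : MetricSpace (Zset r q),
      (∀ z w : Zset r q, @dist _ M.toDist z w = rhoZ r hr0 q D z w) ∧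
      (∀ z w : Zset r q,
        @intrinsicDist _ M.toPseudoMetricSpace z w
          ≤ ENNReal.ofReal (C * rhoZ r hr0 q D z w)) ∧
      ((∀ n, @CompleteSpace _ (D n).toUniformSpace) →
        @CompleteSpace _ M.toUniformSpace) :=
  stmt13_general C hC hX r hr0 D hD q hq
end
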